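/- arXiv:1710.07049 — 2 statements merged into one kernel-verified Lean document; each statement's English description precedes it below -/
import Mathlib

section
/- Define x = (x_n)_{n≥0} ∈ {0,1}^ℕ by x_n = 0 if 2^{2k} ≤ n+1 < 2^{2k+1} for some k ≥ 0, and x_n = 1 if 2^{2k-1} ≤ n+1 < 2^{2k} for some k ≥ 1 (so x = 0 11 0000 1111 1111 … in blocks of doubling lengths). Then, for the left shift S on {0,1}^ℕ: V(x) = {α·δ_{0̄} + (1−α)·δ_{1̄} : 1/3 ≤ α ≤ 2/3} while V^log(x) = {(1/2)·δ_{0̄} + (1/2)·δ_{1̄}}. In particular V^log(x) is a proper subset of V(x). -/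
open MeasureTheory Filter Topology
open scoped ENNReal NNReal Classical

section EmpiricalMeasures

variable {X : Type*} [MeasurableSpace X]

/-- The empirical (Cesàro) measure `E(x, N+1) = (1/(N+1)) ∑_{n=1}^{N+1} δ_{T^{n-1} x}`
(indexed so that `cesaroEmp T x N` has `N + 1` point masses). -/
noncomputable def cesaroEmp (T : X → X) (x : X) (N : ℕ) : ProbabilityMeasure X :=
  ⟨((N + 1 : ℝ≥0∞))⁻¹ • ∑ n ∈ Finset.range (N + 1), Measure.dirac (T^[n] x), by
    constructor
    simp [Measure.smul_apply, Measure.finset_sum_apply, Finset.sum_const,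
      ENNReal.inv_mul_cancel, Nat.cast_add_one_ne_zero]⟩

/-- The harmonic sum `H_{N+1} = ∑_{n=1}^{N+1} 1/n`, as an element of `ℝ≥0∞`. -/
noncomputable def harmonicSum (N : ℕ) : ℝ≥0∞ :=
  ∑ n ∈ Finset.range (N + 1), ((n : ℝ≥0∞) + 1)⁻¹

/-- The logarithmic (harmonic) empirical measure
`E^log(x, N+1) = (1/H_{N+1}) ∑_{n=1}^{N+1} (1/n) δ_{T^{n-1} x}`
(indexed so that `logEmp T x N` has `N + 1` point masses). -/
noncomputable def logEmp (T : X → X) (x : X) (N : ℕ) : ProbabilityMeasure X :=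
  ⟨(harmonicSum N)⁻¹ • ∑ n ∈ Finset.range (N + 1),
      (((n : ℝ≥0∞) + 1)⁻¹ • Measure.dirac (T^[n] x)), by
    constructor
    have h1 : (harmonicSum N) ≠ 0 := by
      intro h
      have hle : (((0 : ℕ) : ℝ≥0∞) + 1)⁻¹ ≤ harmonicSum N :=
        Finset.single_le_sum (f := fun n : ℕ => ((n : ℝ≥0∞) + 1)⁻¹)
          (fun i _ => zero_le) (Finset.mem_range.2 (Nat.succ_pos N))
      rw [h] at hle
      simp at hle
    have h2 : (harmonicSum N) ≠ ⊤ := by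
      refine (ENNReal.sum_lt_top.2 fun n _ => ?_).ne
      simp [ENNReal.inv_lt_top]
    have key : ((harmonicSum N)⁻¹ • ∑ n ∈ Finset.range (N + 1),
        (((n : ℝ≥0∞) + 1)⁻¹ • Measure.dirac (T^[n] x))) Set.univ
        = (harmonicSum N)⁻¹ * harmonicSum N := by
      simp [Measure.smul_apply, Measure.finset_sum_apply, harmonicSum]
    rw [key, ENNReal.inv_mul_cancel h1 h2]⟩

variable [TopologicalSpace X] [OpensMeasurableSpace X]

/-- The set of limit points (along strictly increasing subsequences) of a sequence. -/
def seqLimitPoints {α : Type*} [TopologicalSpace α] (u : ℕ → α) : Set α :=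
  {p | ∃ φ : ℕ → ℕ, StrictMono φ ∧ Tendsto (u ∘ φ) atTop (𝓝 p)}

/-- `V(x)`: the set of weak-* limit points of the empirical measures `(E(x,N))_{N ≥ 1}`. -/
noncomputable def cesaroLimitSet (T : X → X) (x : X) : Set (ProbabilityMeasure X) :=
  seqLimitPoints (fun N => cesaroEmp T x N)

/-- `V^log(x)`: the set of weak-* limit points of the logarithmic empirical measures
`(E^log(x,N))_{N ≥ 2}` (the set of limit points is unaffected by also allowing `N = 1`). -/
noncomputable def logLimitSet (T : X → X) (x : X) : Set (ProbabilityMeasure X) :=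
  seqLimitPoints (fun N => logEmp T x N)

end EmpiricalMeasures

/-- The left shift on `{0,1}^ℕ`. -/
def shift2 : (ℕ → Fin 2) → (ℕ → Fin 2) := fun y n => y (n + 1)

/-- The fixed point `0̄ = 000…`. -/
def zeroBar : ℕ → Fin 2 := fun _ => 0

/-- The fixed point `1̄ = 111…`. -/
def oneBar : ℕ → Fin 2 := fun _ => 1

/-- The point `x = 0 11 0000 1111 1111 … ∈ {0,1}^ℕ`: `x_n = 0` if
`2^(2k) ≤ n+1 < 2^(2k+1)` for some `k ≥ 0`, and `x_n = 1` otherwise (i.e. if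
`2^(2k-1) ≤ n+1 < 2^(2k)` for some `k ≥ 1`). -/
noncomputable def xAlt : ℕ → Fin 2 := fun n =>
  if ∃ k : ℕ, 2 ^ (2 * k) ≤ n + 1 ∧ n + 1 < 2 ^ (2 * k + 1) then 0 else 1


-- ===== auxiliary development =====
open scoped BoundedContinuousFunction

lemma xAlt_eq (n : ℕ) : xAlt n = if Even (Nat.log 2 (n + 1)) then 0 else 1 := by
  unfold xAlt
  congr 1
  simp only [eq_iff_iff]
  constructor
  · rintro ⟨k, h1, h2⟩
    have : Nat.log 2 (n + 1) = 2 * k := Nat.log_eq_of_pow_le_of_lt_pow h1 h2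
    simp [this, even_two_mul]
  · rintro ⟨k, hk⟩
    have hk' : Nat.log 2 (n + 1) = 2 * k := by omega
    refine ⟨k, ?_, ?_⟩
    · have := Nat.pow_log_le_self 2 (Nat.succ_ne_zero n)
      rwa [hk'] at this
    · have := Nat.lt_pow_succ_log_self (by norm_num : 1 < 2) (n + 1)
      rwa [hk'] at this

lemma xAlt_eq_zero_iff (n : ℕ) : xAlt n = 0 ↔ Even (Nat.log 2 (n + 1)) := by
  rw [xAlt_eq]; split <;> simp_all

lemma xAlt_eq_one (n : ℕ) (h : ¬ (xAlt n = 0)) : xAlt n = 1 := by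
  rw [xAlt_eq] at *; split at h <;> simp_all

/-- number of zeros of `xAlt` among indices `n < N`, i.e. `m = n+1 ∈ [1, N]`. -/
noncomputable def zc (N : ℕ) : ℕ := ((Finset.range N).filter (fun n => xAlt n = 0)).card

lemma zc_succ (N : ℕ) :
    zc (N + 1) = zc N + (if Even (Nat.log 2 (N + 1)) then 1 else 0) := by
  unfold zc
  rw [Finset.range_add_one, Finset.filter_insert]
  split
  · rename_i h
    rw [Finset.card_insert_of_notMem (by simp)]
    rw [xAlt_eq_zero_iff] at h
    simp [h]
  · rename_i h
    rw [xAlt_eq_zero_iff] at h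
    simp [h]

lemma zc_le_succ (N : ℕ) : zc N ≤ zc (N+1) ∧ zc (N+1) ≤ zc N + 1 := by
  rw [zc_succ]; split <;> omega

lemma zc_mono : Monotone zc := monotone_nat_of_le_succ (fun n => (zc_le_succ n).1)

lemma log_pow_interval {k m : ℕ} (h1 : 2^k ≤ m) (h2 : m < 2^(k+1)) : Nat.log 2 m = k :=
  Nat.log_eq_of_pow_le_of_lt_pow h1 h2

/-- closed form for `zc`. -/
lemma zc_form : ∀ N : ℕ, 1 ≤ N →
    (Even (Nat.log 2 N) → 3 * zc N + 2 * 4 ^ (Nat.log 2 N / 2) = 3 * N + 2) ∧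
    (¬ Even (Nat.log 2 N) → 3 * zc N + 1 = 4 ^ (Nat.log 2 N / 2 + 1)) := by
  intro N
  induction N with
  | zero => omega
  | succ N ih =>
    intro _
    rcases Nat.eq_or_lt_of_le (Nat.one_le_iff_ne_zero.mpr (Nat.succ_ne_zero N)) with h1 | h1
    · -- N + 1 = 1
      have hN : N = 0 := by omega
      subst hN
      have hz : zc 1 = 1 := by
        unfold zc
        rw [show Finset.range 1 = {0} from rfl]
        rw [Finset.filter_singleton]
        rw [if_pos (by rw [xAlt_eq_zero_iff]; simp)]
        rfl
      constructor
      · intro _; simp [hz]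
      · intro h; exact absurd (by simp : Even (Nat.log 2 1)) h
    · -- N ≥ 1
      have hN1 : 1 ≤ N := by omega
      obtain ⟨ihE, ihO⟩ := ih hN1
      set b := Nat.log 2 N with hb
      have hbl : 2 ^ b ≤ N := Nat.pow_log_le_self 2 (by omega)
      have hbu : N < 2 ^ (b + 1) := Nat.lt_pow_succ_log_self (by norm_num) N
      have hstep := zc_succ N
      by_cases hpow : N + 1 = 2 ^ (b + 1)
      · -- log jumps to b+1
        have hb' : Nat.log 2 (N + 1) = b + 1 :=
          log_pow_interval (by omega) (by rw [hpow]; exact Nat.pow_lt_pow_succ (by norm_num))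
        rcases Nat.even_or_odd b with hbe | hbo
        · -- b even = 2k, b' = 2k+1 odd
          obtain ⟨k, hk0⟩ := hbe
          have hk : b = 2 * k := by omega
          have hbeven : Even b := ⟨k, hk0⟩
          have hIH := ihE hbeven
          have hk2 : b / 2 = k := by omega
          rw [hk2] at hIH
          have hodd : ¬ Even (b + 1) := by simp [Nat.even_add_one, hbeven]
          constructor
          · intro h; rw [hb'] at h; exact absurd h hodd
          · intro _
            rw [hb', hstep, if_neg (by rw [hb']; exact hodd)]
            have hdiv : (b + 1) / 2 = k := by omega
            rw [hdiv]
            -- N = 2^(b+1) - 1 = 2*4^k - 1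
            have hNval : N + 1 = 2 * 4 ^ k := by
              rw [hpow, hk, show 2 * k + 1 = 2 * k + 1 from rfl, pow_succ,
                show (2:ℕ) ^ (2 * k) = 4 ^ k from by rw [pow_mul]; norm_num]
              ring
            omega
        · -- b odd = 2k+1, b' = 2k+2 even
          have hbodd : ¬ Even b := Nat.not_even_iff_odd.mpr hbo
          have hIH := ihO hbodd
          obtain ⟨k, hk⟩ := hbo
          have hk2 : b / 2 = k := by omega
          rw [hk2] at hIH
          have heven : Even (b + 1) := by simp [Nat.even_add_one, hbodd]
          constructor
          · intro _
            rw [hb', hstep, if_pos (by rw [hb']; exact heven)]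
            have hdiv : (b + 1) / 2 = k + 1 := by omega
            rw [hdiv]
            have hNval : N + 1 = 4 ^ (k + 1) := by
              rw [hpow, hk, show 2 * k + 1 + 1 = 2 * (k + 1) from by ring, pow_mul]
              norm_num
            have h4 : (4:ℕ) ^ (k+1) = 4 * 4 ^ k := by ring
            omega
          · intro h; rw [hb'] at h; exact absurd heven h
      · -- log stays at b
        have hb' : Nat.log 2 (N + 1) = b := log_pow_interval (by omega) (by omega)
        rcases Nat.even_or_odd b with hbe | hbo
        · have hIH := ihE hbe
          constructor
          · intro _
            rw [hb', hstep, if_pos (by rw [hb']; exact hbe)]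
            omega
          · intro h; rw [hb'] at h; exact absurd hbe h
        · have hbodd : ¬ Even b := Nat.not_even_iff_odd.mpr hbo
          have hIH := ihO hbodd
          constructor
          · intro h; rw [hb'] at h; exact absurd h hbodd
          · intro _
            rw [hb', hstep, if_neg (by rw [hb']; exact hbodd)]
            omega

lemma four_pow_eq (k : ℕ) : (4:ℕ)^k = 2^(2*k) := by rw [pow_mul]; norm_num

/-- `N ≤ 3 zc N ≤ 2N + 1` for `N ≥ 1`. -/
lemma zc_bounds (N : ℕ) (hN : 1 ≤ N) : N ≤ 3 * zc N ∧ 3 * zc N ≤ 2 * N + 1 := by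
  obtain ⟨hE, hO⟩ := zc_form N hN
  set b := Nat.log 2 N with hb
  have hbl : 2 ^ b ≤ N := Nat.pow_log_le_self 2 (by omega)
  have hbu : N < 2 ^ (b + 1) := Nat.lt_pow_succ_log_self (by norm_num) N
  rcases Nat.even_or_odd b with hbe | hbo
  · have h := hE hbe
    obtain ⟨k, hk⟩ := hbe
    have hk2 : b / 2 = k := by omega
    rw [hk2] at h
    have h4 : (4:ℕ)^k = 2^b := by rw [four_pow_eq]; congr 1; omega
    have h2 : (2:ℕ)^(b+1) = 2 * 2^b := by ring
    omega
  · have hbodd : ¬ Even b := Nat.not_even_iff_odd.mpr hbo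
    have h := hO hbodd
    obtain ⟨k, hk⟩ := hbo
    have hk2 : b / 2 = k := by omega
    rw [hk2] at h
    have h4 : (4:ℕ)^(k+1) = 2 * 2^b := by
      rw [four_pow_eq]
      rw [show 2*(k+1) = (b+1) from by omega]
      ring
    omega

lemma log_of_Ico_even {k N : ℕ} (h1 : 4^k ≤ N) (h2 : N < 2 * 4^k) :
    Nat.log 2 N = 2 * k := by
  apply log_pow_interval
  · rw [← four_pow_eq]; exact h1
  · rw [pow_succ, mul_comm, ← four_pow_eq]; omega

lemma log_of_Ico_odd {k N : ℕ} (h1 : 2 * 4^k ≤ N) (h2 : N < 4^(k+1)) :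
    Nat.log 2 N = 2 * k + 1 := by
  apply log_pow_interval
  · rw [pow_succ, mul_comm, ← four_pow_eq]; exact h1
  · rw [show 2*k+1+1 = 2*(k+1) from by omega, ← four_pow_eq]; exact h2

/-- at the end of a ones-block the ratio is exactly 1/3. -/
lemma zc_third (k : ℕ) (hk : 1 ≤ k) : 3 * zc (4^k - 1) = 4^k - 1 := by
  have h4 : (4:ℕ)^k ≥ 4 := by calc (4:ℕ)^k ≥ 4^1 := Nat.pow_le_pow_right (by norm_num) hk
                                  _ = 4 := by norm_num
  have hlog : Nat.log 2 (4^k - 1) = 2 * (k-1) + 1 := by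
    apply log_of_Ico_odd
    · have : 4^k = 4^(k-1) * 4 := by
        rw [← pow_succ]; congr 1; omega
      omega
    · rw [show k - 1 + 1 = k from by omega]; omega
  have := (zc_form (4^k - 1) (by omega)).2 (by rw [hlog]; simp [Nat.even_add_one, even_two_mul])
  rw [hlog] at this
  rw [show (2*(k-1)+1)/2 + 1 = k from by omega] at this
  omega

/-- at the end of a zeros-block the count is `(2N+1)/3`. -/
lemma zc_twothirds (k : ℕ) : 3 * zc (2 * 4^k - 1) = 2 * (2 * 4^k - 1) + 1 := by
  have h4 : (4:ℕ)^k ≥ 1 := Nat.one_le_pow _ _ (by norm_num)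
  have hlog : Nat.log 2 (2 * 4^k - 1) = 2 * k := by
    apply log_of_Ico_even <;> omega
  have := (zc_form (2 * 4^k - 1) (by omega)).1 (by rw [hlog]; exact even_two_mul k)
  rw [hlog, Nat.mul_div_cancel_left k (by norm_num)] at this
  omega


noncomputable def ff (N : ℕ) : ℝ := (zc N : ℝ) / N

lemma ff_lb (N : ℕ) (hN : 1 ≤ N) : 1/3 ≤ ff N := by
  have h := (zc_bounds N hN).1
  have hNpos : (0:ℝ) < N := by exact_mod_cast hN
  rw [ff, div_le_div_iff₀ (by norm_num) hNpos]
  have : (N:ℝ) ≤ 3 * (zc N : ℝ) := by exact_mod_cast h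
  linarith

lemma ff_ub (N : ℕ) (hN : 1 ≤ N) : ff N ≤ 2/3 + 1/(3*N) := by
  have h := (zc_bounds N hN).2
  have hNpos : (0:ℝ) < N := by exact_mod_cast hN
  have h' : 3 * (zc N : ℝ) ≤ 2 * N + 1 := by exact_mod_cast h
  rw [ff, div_le_iff₀ hNpos, add_mul]
  have h1 : 1/(3*(N:ℝ)) * N = 1/3 := by field_simp; try ring
  rw [h1]
  linarith

lemma ff_step (N : ℕ) (hN : 1 ≤ N) : ff (N+1) ≤ ff N + 1/(N+1) := by
  have h := (zc_le_succ N).2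
  have hNpos : (0:ℝ) < N := by exact_mod_cast hN
  have hN1pos : (0:ℝ) < (N:ℝ)+1 := by linarith
  have h' : (zc (N+1) : ℝ) ≤ zc N + 1 := by exact_mod_cast h
  have key : ff (N+1) ≤ ((zc N : ℝ) + 1)/(N+1) := by
    rw [ff]; push_cast; gcongr
  refine key.trans ?_
  rw [add_div, ff]
  have : (zc N : ℝ)/(N+1) ≤ (zc N : ℝ)/N :=
    div_le_div_of_nonneg_left (by positivity) hNpos (by linarith)
  linarith

lemma ff_third (k : ℕ) (hk : 1 ≤ k) : ff (4^k - 1) = 1/3 := by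
  have h4 : (4:ℕ)^k ≥ 4 := by
    calc (4:ℕ)^k ≥ 4^1 := Nat.pow_le_pow_right (by norm_num) hk
    _ = 4 := by norm_num
  have h := zc_third k hk
  have hpos : (0:ℝ) < ((4^k - 1 : ℕ) : ℝ) := by
    have : 1 ≤ 4^k - 1 := by omega
    exact_mod_cast Nat.lt_of_lt_of_le Nat.zero_lt_one this
  rw [ff, div_eq_iff (ne_of_gt hpos)]
  have h' : 3 * ((zc (4^k-1) : ℝ)) = ((4^k - 1 : ℕ) : ℝ) := by exact_mod_cast h
  linarith

lemma ff_twothirds (k : ℕ) : 2/3 ≤ ff (2 * 4^k - 1) := by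
  have h4 : (4:ℕ)^k ≥ 1 := Nat.one_le_pow _ _ (by norm_num)
  have h := zc_twothirds k
  set N := 2 * 4^k - 1 with hNdef
  have hN1 : 1 ≤ N := by omega
  have hpos : (0:ℝ) < (N : ℝ) := by exact_mod_cast hN1
  rw [ff, le_div_iff₀ hpos]
  have h' : 3 * (zc N : ℝ) = 2 * (N:ℝ) + 1 := by exact_mod_cast h
  linarith

lemma exists_freq_subseq (c : ℝ) (hc1 : 1/3 ≤ c) (hc2 : c ≤ 2/3) :
    ∃ M : ℕ → ℕ, StrictMono M ∧ (∀ k, 4^(k+1) - 1 ≤ M k) ∧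
      Tendsto (fun k => ff (M k)) atTop (𝓝 c) := by
  have hex : ∀ k : ℕ, ∃ N, 4^(k+1) - 1 ≤ N ∧ c ≤ ff N := by
    intro k
    exact ⟨2 * 4^(k+1) - 1, by have : (4:ℕ)^(k+1) ≥ 1 := Nat.one_le_pow _ _ (by norm_num); omega,
      hc2.trans (ff_twothirds (k+1))⟩
  set M : ℕ → ℕ := fun k => Nat.find (hex k) with hM
  have hspec : ∀ k, 4^(k+1) - 1 ≤ M k ∧ c ≤ ff (M k) := fun k => Nat.find_spec (hex k)
  have hub : ∀ k, M k ≤ 2 * 4^(k+1) - 1 := by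
    intro k
    apply Nat.find_le
    exact ⟨by have : (4:ℕ)^(k+1) ≥ 1 := Nat.one_le_pow _ _ (by norm_num); omega,
      hc2.trans (ff_twothirds (k+1))⟩
  have h4k : ∀ k : ℕ, (4:ℕ) ≤ 4^(k+1) := fun k => by
    calc (4:ℕ) = 4^1 := by norm_num
    _ ≤ 4^(k+1) := Nat.pow_le_pow_right (by norm_num) (by omega)
  refine ⟨M, ?_, fun k => (hspec k).1, ?_⟩
  · apply strictMono_nat_of_lt_succ
    intro k
    calc M k ≤ 2 * 4^(k+1) - 1 := hub k
    _ < 4^(k+2) - 1 := by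
        have h1 := h4k k
        have : (4:ℕ)^(k+2) = 4 * 4^(k+1) := by ring
        omega
    _ ≤ M (k+1) := (hspec (k+1)).1
  · -- squeeze : c ≤ ff (M k) ≤ c + (1/4)^k
    have hupper : ∀ k, ff (M k) ≤ c + (1/4:ℝ)^k := by
      intro k
      rcases Nat.eq_or_lt_of_le (hspec k).1 with heq | hlt
      · have : ff (M k) = 1/3 := by rw [← heq]; exact ff_third (k+1) (by omega)
        rw [this]
        have : (0:ℝ) ≤ (1/4:ℝ)^k := by positivity
        linarith
      · -- M k ≥ 4^(k+1), minimality at M k - 1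
        have h1 := h4k k
        have hMk1 : 4^(k+1) ≤ M k := by omega
        have hmin : ¬ (4^(k+1) - 1 ≤ M k - 1 ∧ c ≤ ff (M k - 1)) := by
          refine Nat.find_min (hex k) ?_
          rw [show Nat.find (hex k) = M k from rfl]
          omega
        have hfless : ff (M k - 1) < c := by
          by_contra hge
          exact hmin ⟨by omega, le_of_not_gt hge⟩
        have hstep : ff (M k) ≤ ff (M k - 1) + 1/(M k) := by
          have := ff_step (M k - 1) (by omega)
          rwa [show M k - 1 + 1 = M k from by omega,
            show ((M k - 1 : ℕ):ℝ) + 1 = (M k : ℝ) from by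
              have : (1:ℕ) ≤ M k := by omega
              push_cast [Nat.cast_sub this]; ring] at this
        have hMbig : (4:ℝ)^k ≤ (M k : ℝ) := by
          have : (4:ℕ)^k ≤ M k := by
            calc (4:ℕ)^k ≤ 4^(k+1) := Nat.pow_le_pow_right (by norm_num) (by omega)
            _ ≤ M k := hMk1
          exact_mod_cast this
        have hinv : 1/(M k : ℝ) ≤ (1/4:ℝ)^k := by
          rw [div_pow, one_pow]
          apply div_le_div_of_nonneg_left (by norm_num) (by positivity) hMbig
        linarith
    rw [tendsto_iff_dist_tendsto_zero]
    refine squeeze_zero (g := fun k => (1/4:ℝ)^k) (fun k => dist_nonneg) ?_ ?_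
    · intro k
      rw [Real.dist_eq, abs_le]
      refine ⟨?_, ?_⟩
      · have := (hspec k).2
        have h0 : (0:ℝ) ≤ (1/4:ℝ)^k := by positivity
        linarith
      · have := hupper k; linarith
    · exact tendsto_pow_atTop_nhds_zero_of_lt_one (by norm_num) (by norm_num)


noncomputable def hw (N : ℕ) : ℝ := ∑ n ∈ Finset.range N, (1/(n+1) : ℝ)
noncomputable def ww (N : ℕ) : ℝ :=
  ∑ n ∈ Finset.range N, (if xAlt n = 0 then (1/(n+1) : ℝ) else 0)
noncomputable def eps (m : ℕ) : ℝ := if Even (Nat.log 2 m) then 1 else -1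
noncomputable def DD (N : ℕ) : ℝ := ∑ m ∈ Finset.Ico 1 (N+1), eps m / m

lemma DD_eq (N : ℕ) : DD N = 2 * ww N - hw N := by
  rw [DD, Finset.sum_Ico_eq_sum_range]
  simp only [Nat.add_sub_cancel]
  rw [ww, hw, Finset.mul_sum, ← Finset.sum_sub_distrib]
  refine Finset.sum_congr rfl (fun i _ => ?_)
  rcases Nat.even_or_odd (Nat.log 2 (i + 1)) with he | ho
  · rw [eps, if_pos (by rwa [Nat.add_comm 1 i]), if_pos ((xAlt_eq_zero_iff i).mpr he)]
    push_cast
    ring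
  · have hne : ¬ Even (Nat.log 2 (i+1)) := Nat.not_even_iff_odd.mpr ho
    rw [eps, if_neg (by rwa [Nat.add_comm 1 i]), if_neg (fun h => hne ((xAlt_eq_zero_iff i).mp h))]
    push_cast
    ring

noncomputable def SIco (a b : ℕ) : ℝ := ∑ m ∈ Finset.Ico a b, (1/m : ℝ)
noncomputable def AA (k : ℕ) : ℝ := SIco (4^k) (2 * 4^k)
noncomputable def BB (k : ℕ) : ℝ := SIco (2 * 4^k) (4^(k+1))

lemma pair_sum (f : ℕ → ℝ) (a : ℕ) : ∀ b : ℕ,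
    ∑ m ∈ Finset.Ico (2*a) (2*b), f m = ∑ m ∈ Finset.Ico a b, (f (2*m) + f (2*m+1)) := by
  intro b
  induction b with
  | zero => simp
  | succ b ih =>
    by_cases hab : a ≤ b
    · rw [Finset.sum_Ico_succ_top hab]
      rw [show 2*(b+1) = (2*b+1)+1 from by ring]
      rw [Finset.sum_Ico_succ_top (by omega), Finset.sum_Ico_succ_top (by omega), ih]
      ring
    · rw [Finset.Ico_eq_empty (by omega), Finset.Ico_eq_empty (by omega)]
      simp

lemma four_succ (k : ℕ) : (4:ℕ)^(k+1) = 2 * (2 * 4^k) := by ring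

lemma BB_pair (k : ℕ) :
    BB k = ∑ m ∈ Finset.Ico ((4:ℕ)^k) (2 * 4^k), ((1/(2*(m:ℝ))) + 1/(2*(m:ℝ)+1)) := by
  rw [BB, SIco, four_succ]
  rw [pair_sum (fun m => (1/m : ℝ)) (4^k) (2 * 4^k)]
  refine Finset.sum_congr rfl (fun m _ => ?_)
  push_cast
  ring

lemma AB_diff (k : ℕ) : 0 ≤ AA k - BB k ∧ AA k - BB k ≤ (1/4:ℝ)^k := by
  have hcard : (Finset.Ico ((4:ℕ)^k) (2 * 4^k)).card = 4^k := by
    rw [Nat.card_Ico]; omega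
  have h4pos : (0:ℝ) < 4^k := by positivity
  rw [AA, SIco, BB_pair, ← Finset.sum_sub_distrib]
  constructor
  · apply Finset.sum_nonneg
    intro m hm
    rw [Finset.mem_Ico] at hm
    have hm1 : (1:ℕ) ≤ m := le_trans (Nat.one_le_pow _ _ (by norm_num)) hm.1
    have hmpos : (0:ℝ) < m := by exact_mod_cast hm1
    have e1 : (1/(m:ℝ)) - 1/(2*m) = 1/(2*m) := by field_simp; ring
    have e2 : (1/(2*(m:ℝ)+1)) ≤ 1/(2*m) := by
      apply div_le_div_of_nonneg_left (by norm_num) (by positivity) (by linarith)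
    linarith
  · have hterm : ∀ m ∈ Finset.Ico ((4:ℕ)^k) (2 * 4^k),
        (1/(m:ℝ)) - ((1/(2*(m:ℝ))) + 1/(2*(m:ℝ)+1)) ≤ (1/4:ℝ)^k / 4^k := by
      intro m hm
      rw [Finset.mem_Ico] at hm
      have hm4 : (4:ℝ)^k ≤ m := by exact_mod_cast hm.1
      have hmpos : (0:ℝ) < m := lt_of_lt_of_le h4pos hm4
      have e1 : (1/(m:ℝ)) - ((1/(2*m)) + 1/(2*m+1)) = 1/(2*m) - 1/(2*m+1) := by
        field_simp; ring
      rw [e1]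
      have e2 : (1/(2*(m:ℝ)) - 1/(2*m+1)) = 1/(2*m*(2*m+1)) := by field_simp; ring
      rw [e2]
      have e3 : (1/4:ℝ)^k / 4^k = 1/(4^k * 4^k) := by
        rw [div_pow, one_pow, div_div]
      rw [e3]
      apply div_le_div_of_nonneg_left (by norm_num) (by positivity)
      nlinarith
    calc ∑ m ∈ Finset.Ico ((4:ℕ)^k) (2 * 4^k),
          ((1/(m:ℝ)) - ((1/(2*(m:ℝ))) + 1/(2*(m:ℝ)+1)))
        ≤ ∑ _m ∈ Finset.Ico ((4:ℕ)^k) (2 * 4^k), ((1/4:ℝ)^k / 4^k) :=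
          Finset.sum_le_sum hterm
      _ = 4^k * ((1/4:ℝ)^k / 4^k) := by
          rw [Finset.sum_const, hcard, nsmul_eq_mul]
          push_cast
          ring
      _ = (1/4:ℝ)^k := by field_simp

lemma AA_nonneg (k : ℕ) : 0 ≤ AA k := by
  rw [AA, SIco]; exact Finset.sum_nonneg (fun m _ => by positivity)

lemma BB_nonneg (k : ℕ) : 0 ≤ BB k := by
  rw [BB, SIco]; exact Finset.sum_nonneg (fun m _ => by positivity)

lemma AA_le_one (k : ℕ) : AA k ≤ 1 := by
  have hcard : (Finset.Ico ((4:ℕ)^k) (2 * 4^k)).card = 4^k := by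
    rw [Nat.card_Ico]; omega
  have h4pos : (0:ℝ) < 4^k := by positivity
  rw [AA, SIco]
  calc ∑ m ∈ Finset.Ico ((4:ℕ)^k) (2 * 4^k), (1/(m:ℝ))
      ≤ ∑ _m ∈ Finset.Ico ((4:ℕ)^k) (2 * 4^k), (1/(4:ℝ)^k) := by
        apply Finset.sum_le_sum
        intro m hm
        rw [Finset.mem_Ico] at hm
        have hm4 : (4:ℝ)^k ≤ m := by exact_mod_cast hm.1
        exact div_le_div_of_nonneg_left (by norm_num) (by linarith) hm4
    _ = 1 := by
        rw [Finset.sum_const, hcard, nsmul_eq_mul]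
        push_cast
        field_simp

lemma eps_on_even {k m : ℕ} (h1 : 4^k ≤ m) (h2 : m < 2 * 4^k) : eps m = 1 := by
  rw [eps, if_pos]
  rw [log_of_Ico_even h1 h2]
  exact even_two_mul k

lemma eps_on_odd {k m : ℕ} (h1 : 2 * 4^k ≤ m) (h2 : m < 4^(k+1)) : eps m = -1 := by
  rw [eps, if_neg]
  rw [log_of_Ico_odd h1 h2]
  simp [Nat.even_add_one, even_two_mul]

lemma DD_blockA (k N : ℕ) (h1 : 4^k ≤ N+1) (h2 : N+1 ≤ 2 * 4^k) :
    ∑ m ∈ Finset.Ico ((4:ℕ)^k) (N+1), eps m / m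
      = ∑ m ∈ Finset.Ico ((4:ℕ)^k) (N+1), (1/(m:ℝ)) := by
  refine Finset.sum_congr rfl (fun m hm => ?_)
  rw [Finset.mem_Ico] at hm
  rw [eps_on_even hm.1 (by omega)]

lemma DD_blockB (k N : ℕ) (h1 : 2 * 4^k ≤ N+1) (h2 : N+1 ≤ 4^(k+1)) :
    ∑ m ∈ Finset.Ico (2 * (4:ℕ)^k) (N+1), eps m / m
      = - ∑ m ∈ Finset.Ico (2 * (4:ℕ)^k) (N+1), (1/(m:ℝ)) := by
  rw [← Finset.sum_neg_distrib]
  refine Finset.sum_congr rfl (fun m hm => ?_)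
  rw [Finset.mem_Ico] at hm
  rw [eps_on_odd hm.1 (by omega)]
  ring

lemma DD_pairend : ∀ K : ℕ, DD (4^K - 1) = ∑ k ∈ Finset.range K, (AA k - BB k) := by
  intro K
  induction K with
  | zero => simp [DD]
  | succ K ih =>
    have h1 : (1:ℕ) ≤ 4^K := Nat.one_le_pow _ _ (by norm_num)
    have h2 : (4:ℕ)^K ≤ 2 * 4^K := by omega
    have h3 : (2:ℕ) * 4^K ≤ 4^(K+1) := by
      have : (4:ℕ)^(K+1) = 4 * 4^K := by ring
      omega
    have hs : 4^(K+1) - 1 + 1 = 4^(K+1) := by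
      have : (1:ℕ) ≤ 4^(K+1) := Nat.one_le_pow _ _ (by norm_num)
      omega
    have hsK : 4^K - 1 + 1 = 4^K := by omega
    rw [DD, hs]
    rw [← Finset.sum_Ico_consecutive (fun m => eps m / (m:ℝ)) (by omega : (1:ℕ) ≤ 2*4^K) h3]
    rw [← Finset.sum_Ico_consecutive (fun m => eps m / (m:ℝ)) (by omega : (1:ℕ) ≤ 4^K) h2]
    have e1 : ∑ m ∈ Finset.Ico 1 (4^K), eps m / (m:ℝ) = DD (4^K - 1) := by rw [DD, hsK]
    have e2 : ∑ m ∈ Finset.Ico ((4:ℕ)^K) (2*4^K), eps m / (m:ℝ) = AA K := by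
      have := DD_blockA K (2*4^K - 1) (by omega) (by omega)
      rw [show 2*4^K - 1 + 1 = 2*4^K from by omega] at this
      rw [this, AA, SIco]
    have e3 : ∑ m ∈ Finset.Ico (2*(4:ℕ)^K) (4^(K+1)), eps m / (m:ℝ) = - BB K := by
      have := DD_blockB K (4^(K+1) - 1) (by omega) (by omega)
      rw [show 4^(K+1) - 1 + 1 = 4^(K+1) from by omega] at this
      rw [this, BB, SIco]
    rw [e1, e2, e3, ih, Finset.sum_range_succ]
    ring

lemma ee_bounds (K : ℕ) : 0 ≤ DD (4^K - 1) ∧ DD (4^K - 1) ≤ 2 := by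
  rw [DD_pairend]
  constructor
  · exact Finset.sum_nonneg (fun k _ => (AB_diff k).1)
  · refine le_trans (Finset.sum_le_sum (fun k _ => ?_)) (sum_geometric_two_le K)
    exact (AB_diff k).2.trans (pow_le_pow_left₀ (by norm_num) (by norm_num) k)

lemma DD_bounds (N : ℕ) (hN : 1 ≤ N) : 0 ≤ DD N ∧ DD N ≤ 3 := by
  set b := Nat.log 2 N with hb
  have hbl : 2 ^ b ≤ N := Nat.pow_log_le_self 2 (by omega)
  have hbu : N < 2 ^ (b + 1) := Nat.lt_pow_succ_log_self (by norm_num) N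
  rcases Nat.even_or_odd b with hbe | hbo
  · obtain ⟨k, hk0⟩ := hbe
    have hk : b = 2 * k := by omega
    have h4 : (4:ℕ)^k = 2^b := by rw [hk, pow_mul]; norm_num
    have h42 : (2:ℕ) * 4^k = 2^(b+1) := by rw [h4]; ring
    have hlow : 4^k ≤ N := by omega
    have hhigh : N < 2 * 4^k := by omega
    have h1 : (1:ℕ) ≤ 4^k := Nat.one_le_pow _ _ (by norm_num)
    have hsplit : DD N = DD (4^k - 1) + ∑ m ∈ Finset.Ico ((4:ℕ)^k) (N+1), (1/(m:ℝ)) := by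
      rw [DD]
      rw [← Finset.sum_Ico_consecutive (fun m => eps m / (m:ℝ))
        (by omega : (1:ℕ) ≤ 4^k) (by omega : (4:ℕ)^k ≤ N+1)]
      rw [DD_blockA k N (by omega) (by omega)]
      have e1 : ∑ m ∈ Finset.Ico 1 ((4:ℕ)^k), eps m / (m:ℝ) = DD (4^k - 1) := by
        rw [DD, show 4^k - 1 + 1 = 4^k from by omega]
      rw [e1]
    have hT0 : 0 ≤ ∑ m ∈ Finset.Ico ((4:ℕ)^k) (N+1), (1/(m:ℝ)) :=
      Finset.sum_nonneg (fun m _ => by positivity)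
    have hT1 : ∑ m ∈ Finset.Ico ((4:ℕ)^k) (N+1), (1/(m:ℝ)) ≤ AA k := by
      rw [AA, SIco]
      apply Finset.sum_le_sum_of_subset_of_nonneg
      · apply Finset.Ico_subset_Ico le_rfl
        omega
      · intro m _ _; positivity
    have he := ee_bounds k
    have hA1 := AA_le_one k
    constructor
    · rw [hsplit]; linarith
    · rw [hsplit]; linarith
  · obtain ⟨k, hk⟩ := hbo
    have h4 : (2:ℕ) * 4^k = 2^b := by rw [hk, pow_succ, pow_mul]; ring_nf
    have h42 : (4:ℕ)^(k+1) = 2^(b+1) := by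
      rw [show b + 1 = 2*(k+1) from by omega, pow_mul]; norm_num
    have hlow : 2 * 4^k ≤ N := by omega
    have hhigh : N < 4^(k+1) := by omega
    have h1 : (1:ℕ) ≤ 4^k := Nat.one_le_pow _ _ (by norm_num)
    have hsplit : DD N = DD (4^k - 1) + AA k
        - ∑ m ∈ Finset.Ico (2 * (4:ℕ)^k) (N+1), (1/(m:ℝ)) := by
      rw [DD]
      rw [← Finset.sum_Ico_consecutive (fun m => eps m / (m:ℝ))
        (by omega : (1:ℕ) ≤ 2 * 4^k) (by omega : (2:ℕ) * 4^k ≤ N+1)]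
      rw [← Finset.sum_Ico_consecutive (fun m => eps m / (m:ℝ))
        (by omega : (1:ℕ) ≤ 4^k) (by omega : (4:ℕ)^k ≤ 2 * 4^k)]
      rw [DD_blockB k N (by omega) (by omega)]
      have e2 : ∑ m ∈ Finset.Ico ((4:ℕ)^k) (2*4^k), eps m / (m:ℝ) = AA k := by
        have := DD_blockA k (2*4^k - 1) (by omega) (by omega)
        rw [show 2*4^k - 1 + 1 = 2*4^k from by omega] at this
        rw [this, AA, SIco]
      rw [e2]
      have e1 : ∑ m ∈ Finset.Ico 1 ((4:ℕ)^k), eps m / (m:ℝ) = DD (4^k - 1) := by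
        rw [DD, show 4^k - 1 + 1 = 4^k from by omega]
      rw [e1]
      ring
    have hT0 : 0 ≤ ∑ m ∈ Finset.Ico (2 * (4:ℕ)^k) (N+1), (1/(m:ℝ)) :=
      Finset.sum_nonneg (fun m _ => by positivity)
    have hTB : ∑ m ∈ Finset.Ico (2 * (4:ℕ)^k) (N+1), (1/(m:ℝ)) ≤ BB k := by
      rw [BB, SIco]
      apply Finset.sum_le_sum_of_subset_of_nonneg
      · apply Finset.Ico_subset_Ico le_rfl
        omega
      · intro m _ _; positivity
    have he := ee_bounds k
    have hA1 := AA_le_one k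
    have hAB := AB_diff k
    constructor
    · rw [hsplit]; linarith
    · rw [hsplit]; linarith

lemma hw_one_le (N : ℕ) (hN : 1 ≤ N) : 1 ≤ hw N := by
  rw [hw]
  calc (1:ℝ) = 1/((0:ℕ)+1) := by norm_num
  _ ≤ _ := Finset.single_le_sum (f := fun n : ℕ => (1/(n+1):ℝ))
      (fun i _ => by positivity) (Finset.mem_range.2 (by omega))

lemma hw_tendsto : Tendsto hw atTop atTop := by
  have := Real.tendsto_sum_range_one_div_nat_succ_atTop
  exact this

lemma ratio_tendsto_half : Tendsto (fun N => ww N / hw N) atTop (𝓝 (1/2)) := by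
  have herr : Tendsto (fun N => DD N / (2 * hw N)) atTop (𝓝 0) := by
    apply squeeze_zero' (g := fun N => 3 / (2 * hw N))
    · filter_upwards [eventually_ge_atTop 1] with N hN
      have h1 := (DD_bounds N hN).1
      have h2 := hw_one_le N hN
      positivity
    · filter_upwards [eventually_ge_atTop 1] with N hN
      have h2 := (DD_bounds N hN).2
      have h3 := hw_one_le N hN
      apply div_le_div_of_nonneg_right h2 (by linarith)
    · exact Tendsto.div_atTop tendsto_const_nhds
        (Tendsto.const_mul_atTop (by norm_num) hw_tendsto)
  have : Tendsto (fun N => 1/2 + DD N / (2 * hw N)) atTop (𝓝 (1/2)) := by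
    have := Tendsto.const_add (1/2 : ℝ) herr
    simpa using this
  apply this.congr'
  filter_upwards [eventually_ge_atTop 1] with N hN
  have h2 := hw_one_le N hN
  have hD := DD_eq N
  have hne : hw N ≠ 0 := by linarith
  rw [hD]
  field_simp
  ring




lemma shift2_iter (y : ℕ → Fin 2) (m n : ℕ) : (shift2^[m] y) n = y (n + m) := by
  induction m generalizing y n with
  | zero => rfl
  | succ m ih =>
    rw [Function.iterate_succ_apply, ih (shift2 y) n]
    rfl

abbrev Xsp := ℕ → Fin 2

noncomputable def mix (α : ℝ≥0) (hα : α ≤ 1) : ProbabilityMeasure Xsp :=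
  ⟨(α : ℝ≥0∞) • Measure.dirac zeroBar + ((1 - α : ℝ≥0) : ℝ≥0∞) • Measure.dirac oneBar, by
    constructor
    simp only [Measure.add_apply, Measure.smul_apply, smul_eq_mul,
      Measure.dirac_apply_of_mem (Set.mem_univ _), mul_one]
    rw [← ENNReal.coe_add, add_tsub_cancel_of_le hα, ENNReal.coe_one]⟩

instance finSMulDirac (c : ℝ≥0) (p : Xsp) :
    IsFiniteMeasure ((c : ℝ≥0∞) • Measure.dirac p) := by
  constructor
  simp [Measure.smul_apply]

lemma integral_mix (α : ℝ≥0) (hα : α ≤ 1) (g : Xsp →ᵇ ℝ) :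
    ∫ y, g y ∂(mix α hα : Measure Xsp)
      = (α : ℝ) * g zeroBar + ((1 - α : ℝ≥0) : ℝ) * g oneBar := by
  have hint : ∀ (c : ℝ≥0) (p : Xsp), Integrable g ((c : ℝ≥0∞) • Measure.dirac p) :=
    fun c p => g.integrable _
  rw [show (mix α hα : Measure Xsp)
      = (α : ℝ≥0∞) • Measure.dirac zeroBar + ((1 - α : ℝ≥0) : ℝ≥0∞) • Measure.dirac oneBar
      from rfl]
  rw [integral_add_measure (hint α zeroBar) (hint (1-α) oneBar)]
  rw [integral_smul_measure, integral_smul_measure, integral_dirac, integral_dirac]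
  rw [ENNReal.coe_toReal, ENNReal.coe_toReal, smul_eq_mul, smul_eq_mul]

lemma toReal_natsucc (n : ℕ) : ((n : ℝ≥0∞) + 1).toReal = (n:ℝ) + 1 := by
  rw [ENNReal.toReal_add (by simp) (by simp)]
  simp

lemma integral_cesaro (T : Xsp → Xsp) (x : Xsp) (N : ℕ) (g : Xsp →ᵇ ℝ) :
    ∫ y, g y ∂(cesaroEmp T x N : Measure Xsp)
      = ((N:ℝ)+1)⁻¹ * ∑ n ∈ Finset.range (N+1), g (T^[n] x) := by
  rw [show (cesaroEmp T x N : Measure Xsp)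
      = ((N + 1 : ℝ≥0∞))⁻¹ • ∑ n ∈ Finset.range (N + 1), Measure.dirac (T^[n] x) from rfl]
  rw [integral_smul_measure]
  rw [integral_finset_sum_measure (fun n _ => g.integrable _)]
  simp only [integral_dirac, smul_eq_mul]
  congr 1
  rw [ENNReal.toReal_inv, toReal_natsucc]

lemma integral_logEmp (x : Xsp) (N : ℕ) (g : Xsp →ᵇ ℝ) :
    ∫ y, g y ∂(logEmp shift2 x N : Measure Xsp)
      = ((∑ n ∈ Finset.range (N+1), (1/((n:ℝ)+1)))⁻¹)
        * ∑ n ∈ Finset.range (N+1), (1/((n:ℝ)+1)) * g (shift2^[n] x) := by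
  rw [show (logEmp shift2 x N : Measure Xsp)
      = (harmonicSum N)⁻¹ • ∑ n ∈ Finset.range (N + 1),
          (((n : ℝ≥0∞) + 1)⁻¹ • Measure.dirac (shift2^[n] x)) from rfl]
  rw [integral_smul_measure]
  rw [integral_finset_sum_measure (fun n _ => ?_)]
  · simp only [integral_smul_measure, integral_dirac, smul_eq_mul]
    rw [ENNReal.toReal_inv]
    have h1 : (harmonicSum N).toReal = ∑ n ∈ Finset.range (N+1), (1/((n:ℝ)+1)) := by
      rw [harmonicSum, ENNReal.toReal_sum (fun n _ => by simp [ENNReal.inv_ne_top])]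
      refine Finset.sum_congr rfl (fun n _ => ?_)
      rw [ENNReal.toReal_inv, toReal_natsucc, one_div]
    rw [h1]
    congr 1
    refine Finset.sum_congr rfl (fun n _ => ?_)
    congr 1
    rw [ENNReal.toReal_inv, toReal_natsucc, one_div]
  · have : Integrable g (Measure.dirac (shift2^[n] x)) := g.integrable _
    exact this.smul_measure (by simp [ENNReal.inv_ne_top])


/-- the "target" fixed point approximated by the orbit at time `n`. -/
noncomputable def tgt (n : ℕ) : Xsp := if xAlt n = 0 then zeroBar else oneBar

lemma cylinder_subset_of_nhds {p : Xsp} {U : Set Xsp} (hU : U ∈ 𝓝 p) :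
    ∃ L : ℕ, 1 ≤ L ∧ ∀ y : Xsp, (∀ j < L, y j = p j) → y ∈ U := by
  rw [nhds_pi, Filter.mem_pi] at hU
  obtain ⟨I, hIfin, t, ht, hsub⟩ := hU
  refine ⟨(hIfin.toFinset.sup id) + 1, by omega, fun y hy => ?_⟩
  apply hsub
  intro i hi
  have hiI : i ∈ hIfin.toFinset := hIfin.mem_toFinset.mpr hi
  have : i ≤ hIfin.toFinset.sup id := Finset.le_sup (f := id) hiI
  have hyi : y i = p i := hy i (by omega)
  rw [hyi]
  have := ht i
  rwa [nhds_discrete, Filter.mem_pure] at this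

lemma key_cont (g : Xsp →ᵇ ℝ) (ε : ℝ) (hε : 0 < ε) :
    ∃ L : ℕ, 1 ≤ L ∧ ∀ n : ℕ, Nat.log 2 (n+1) = Nat.log 2 (n+L) →
      |g (shift2^[n] xAlt) - g (tgt n)| ≤ ε := by
  have h0 : {y : Xsp | |g y - g zeroBar| < ε} ∈ 𝓝 zeroBar := by
    have := (g.continuous.tendsto zeroBar) (Metric.ball_mem_nhds (g zeroBar) hε)
    simpa [Set.preimage, Metric.mem_ball, Real.dist_eq] using this
  have h1 : {y : Xsp | |g y - g oneBar| < ε} ∈ 𝓝 oneBar := by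
    have := (g.continuous.tendsto oneBar) (Metric.ball_mem_nhds (g oneBar) hε)
    simpa [Set.preimage, Metric.mem_ball, Real.dist_eq] using this
  obtain ⟨L0, hL0, hsub0⟩ := cylinder_subset_of_nhds h0
  obtain ⟨L1, hL1, hsub1⟩ := cylinder_subset_of_nhds h1
  refine ⟨max L0 L1, le_trans hL0 (le_max_left _ _), fun n hlog => ?_⟩
  set L := max L0 L1 with hLdef
  have hconst : ∀ j < L, xAlt (n + j) = xAlt n := by
    intro j hj
    have hmono1 : Nat.log 2 (n+1) ≤ Nat.log 2 (n+j+1) :=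
      Nat.log_mono_right (by omega)
    have hmono2 : Nat.log 2 (n+j+1) ≤ Nat.log 2 (n+L) :=
      Nat.log_mono_right (by omega)
    have heq : Nat.log 2 (n+j+1) = Nat.log 2 (n+1) := by omega
    by_cases hc : Even (Nat.log 2 (n+1))
    · have h1 : xAlt (n+j) = 0 := (xAlt_eq_zero_iff _).mpr (by rwa [heq])
      have h2 : xAlt n = 0 := (xAlt_eq_zero_iff _).mpr hc
      rw [h1, h2]
    · have h1 : ¬ xAlt (n+j) = 0 := fun h => hc (by rw [← heq]; exact (xAlt_eq_zero_iff _).mp h)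
      have h2 : ¬ xAlt n = 0 := fun h => hc ((xAlt_eq_zero_iff _).mp h)
      rw [xAlt_eq_one _ h1, xAlt_eq_one _ h2]
  by_cases hc : xAlt n = 0
  · have : shift2^[n] xAlt ∈ {y : Xsp | |g y - g zeroBar| < ε} := by
      apply hsub0
      intro j hj
      rw [shift2_iter, zeroBar]
      rw [show xAlt (j + n) = xAlt (n + j) from by rw [Nat.add_comm]]
      rw [hconst j (lt_of_lt_of_le hj (le_max_left _ _)), hc]
    rw [tgt, if_pos hc]
    exact le_of_lt this
  · have hone : xAlt n = 1 := xAlt_eq_one n hc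
    have : shift2^[n] xAlt ∈ {y : Xsp | |g y - g oneBar| < ε} := by
      apply hsub1
      intro j hj
      rw [shift2_iter, oneBar]
      rw [show xAlt (j + n) = xAlt (n + j) from by rw [Nat.add_comm]]
      rw [hconst j (lt_of_lt_of_le hj (le_max_right _ _)), hone]
    rw [tgt, if_neg hc]
    exact le_of_lt this

/-- the set of "bad" indices `n < M` (within distance `L` of a block boundary). -/
noncomputable def badF (L M : ℕ) : Finset ℕ :=
  (Finset.range M).filter (fun n => ¬ (Nat.log 2 (n+1) = Nat.log 2 (n+L)))

lemma bad_subset (L M : ℕ) (hL : 1 ≤ L) :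
    badF L M ⊆ (Finset.range (Nat.log 2 (M+L) + 1)).biUnion
      (fun b => Finset.Ico (2^b - L) (2^b)) := by
  intro n hn
  rw [badF, Finset.mem_filter, Finset.mem_range] at hn
  obtain ⟨hnM, hne⟩ := hn
  set b' := Nat.log 2 (n + L) with hb'
  have hmono : Nat.log 2 (n+1) ≤ b' := Nat.log_mono_right (by omega)
  have hlt : Nat.log 2 (n+1) < b' := lt_of_le_of_ne hmono hne
  have hup : n + 1 < 2 ^ b' := by
    have := Nat.lt_pow_of_log_lt (by norm_num : 1 < 2) hlt
    exact this
  have hlow : 2 ^ b' ≤ n + L := Nat.pow_log_le_self 2 (by omega)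
  rw [Finset.mem_biUnion]
  refine ⟨b', ?_, ?_⟩
  · rw [Finset.mem_range]
    have : b' ≤ Nat.log 2 (M + L) := Nat.log_mono_right (by omega)
    omega
  · rw [Finset.mem_Ico]
    omega

lemma bad_card (L M : ℕ) (hL : 1 ≤ L) :
    (badF L M).card ≤ (Nat.log 2 (M+L) + 1) * L := by
  calc (badF L M).card
      ≤ ((Finset.range (Nat.log 2 (M+L) + 1)).biUnion
          (fun b => Finset.Ico (2^b - L) (2^b))).card :=
        Finset.card_le_card (bad_subset L M hL)
    _ ≤ ∑ b ∈ Finset.range (Nat.log 2 (M+L) + 1), (Finset.Ico (2^b - L) (2^b)).card :=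
        Finset.card_biUnion_le
    _ ≤ ∑ _b ∈ Finset.range (Nat.log 2 (M+L) + 1), L := by
        apply Finset.sum_le_sum
        intro b _
        rw [Nat.card_Ico]
        omega
    _ = (Nat.log 2 (M+L) + 1) * L := by rw [Finset.sum_const, smul_eq_mul, Finset.card_range]

lemma sum_union_le_of_nonneg {A B : Finset ℕ} {f : ℕ → ℝ} (hf : ∀ n, 0 ≤ f n) :
    ∑ n ∈ A ∪ B, f n ≤ ∑ n ∈ A, f n + ∑ n ∈ B, f n := by
  have h := Finset.sum_union_inter (s₁ := A) (s₂ := B) (f := f)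
  have h2 : 0 ≤ ∑ n ∈ A ∩ B, f n := Finset.sum_nonneg (fun n _ => hf n)
  linarith

lemma sum_biUnion_le_of_nonneg {s : Finset ℕ} {t : ℕ → Finset ℕ} {f : ℕ → ℝ}
    (hf : ∀ n, 0 ≤ f n) :
    ∑ n ∈ s.biUnion t, f n ≤ ∑ b ∈ s, ∑ n ∈ t b, f n := by
  induction s using Finset.induction with
  | empty => simp
  | insert a s ha ih =>
    rw [Finset.biUnion_insert, Finset.sum_insert ha]
    calc ∑ n ∈ t a ∪ s.biUnion t, f n ≤ ∑ n ∈ t a, f n + ∑ n ∈ s.biUnion t, f n :=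
          sum_union_le_of_nonneg hf
      _ ≤ ∑ n ∈ t a, f n + ∑ b ∈ s, ∑ n ∈ t b, f n := by linarith

lemma bad_hsum (L M : ℕ) (hL : 1 ≤ L) :
    ∑ n ∈ badF L M, (1/((n:ℝ)+1))
      ≤ ((Nat.log 2 (2*L) + 1) : ℝ) * L + 4*L := by
  set R := Nat.log 2 (M+L) + 1 with hR
  set B := Nat.log 2 (2*L) with hB
  have hf : ∀ n : ℕ, (0:ℝ) ≤ 1/((n:ℝ)+1) := fun n => by positivity
  have step1 : ∑ n ∈ badF L M, (1/((n:ℝ)+1))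
      ≤ ∑ n ∈ (Finset.range R).biUnion (fun b => Finset.Ico (2^b - L) (2^b)),
          (1/((n:ℝ)+1)) :=
    Finset.sum_le_sum_of_subset_of_nonneg (bad_subset L M hL) (fun n _ _ => hf n)
  have step2 : ∑ n ∈ (Finset.range R).biUnion (fun b => Finset.Ico (2^b - L) (2^b)),
      (1/((n:ℝ)+1)) ≤ ∑ b ∈ Finset.range R, ∑ n ∈ Finset.Ico (2^b - L) (2^b),
        (1/((n:ℝ)+1)) :=
    sum_biUnion_le_of_nonneg (fun n => hf n)
  have hSb : ∀ b : ℕ, ∑ n ∈ Finset.Ico (2^b - L) (2^b), (1/((n:ℝ)+1))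
      ≤ (if b ≤ B then (L:ℝ) else 0) + 2*L*(1/2:ℝ)^b := by
    intro b
    have hcard : (Finset.Ico (2^b - L) (2^b)).card ≤ L := by
      rw [Nat.card_Ico]; omega
    by_cases hbB : b ≤ B
    · have hSle : ∑ n ∈ Finset.Ico (2^b - L) (2^b), (1/((n:ℝ)+1)) ≤ (L:ℝ) := by
        calc ∑ n ∈ Finset.Ico (2^b - L) (2^b), (1/((n:ℝ)+1))
            ≤ ∑ _n ∈ Finset.Ico (2^b - L) (2^b), (1:ℝ) := by
              apply Finset.sum_le_sum
              intro n _
              rw [div_le_one (by positivity)]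
              have : (0:ℝ) ≤ n := Nat.cast_nonneg n
              linarith
          _ = (Finset.Ico (2^b - L) (2^b)).card • (1:ℝ) := by rw [Finset.sum_const]
          _ ≤ (L:ℝ) := by
              rw [nsmul_eq_mul, mul_one]
              exact_mod_cast hcard
      rw [if_pos hbB]
      have : (0:ℝ) ≤ 2*L*(1/2:ℝ)^b := by positivity
      linarith
    · -- 2L < 2^b
      push_neg at hbB
      have h2L : 2*L < 2^b := by
        have h1 : 2*L < 2^(B+1) := Nat.lt_pow_succ_log_self (by norm_num) (2*L)
        calc 2*L < 2^(B+1) := h1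
        _ ≤ 2^b := Nat.pow_le_pow_right (by norm_num) (by omega)
      have hterm : ∀ n ∈ Finset.Ico (2^b - L) (2^b), (1/((n:ℝ)+1)) ≤ 2*(1/2:ℝ)^b := by
        intro n hn
        rw [Finset.mem_Ico] at hn
        have hn1 : 2^b - L ≤ n := hn.1
        have hnr : ((2:ℝ)^b)/2 ≤ (n:ℝ)+1 := by
          have hc : 2^b ≤ n + L := by omega
          have hcr : ((2:ℝ))^b ≤ (n:ℝ) + L := by exact_mod_cast hc
          have hLr : (L:ℝ) ≤ ((2:ℝ)^b)/2 := by
            have : (2*L : ℕ) ≤ 2^b := by omega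
            have h2 : (2*(L:ℝ)) ≤ (2:ℝ)^b := by exact_mod_cast this
            linarith
          linarith
        have h2b : (0:ℝ) < ((2:ℝ)^b)/2 := by positivity
        calc (1/((n:ℝ)+1)) ≤ 1/(((2:ℝ)^b)/2) := by
              apply div_le_div_of_nonneg_left (by norm_num) h2b hnr
          _ = 2*(1/2:ℝ)^b := by
              rw [div_pow, one_pow, one_div_div]
              field_simp
      rw [if_neg (by omega)]
      calc ∑ n ∈ Finset.Ico (2^b - L) (2^b), (1/((n:ℝ)+1))
          ≤ ∑ _n ∈ Finset.Ico (2^b - L) (2^b), (2*(1/2:ℝ)^b) :=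
            Finset.sum_le_sum hterm
        _ = (Finset.Ico (2^b - L) (2^b)).card • (2*(1/2:ℝ)^b) := by rw [Finset.sum_const]
        _ ≤ (L:ℝ) * (2*(1/2:ℝ)^b) := by
            rw [nsmul_eq_mul]
            apply mul_le_mul_of_nonneg_right _ (by positivity)
            exact_mod_cast hcard
        _ = 0 + 2*L*(1/2:ℝ)^b := by ring
      
  have step3 : ∑ b ∈ Finset.range R, ∑ n ∈ Finset.Ico (2^b - L) (2^b), (1/((n:ℝ)+1))
      ≤ ∑ b ∈ Finset.range R, ((if b ≤ B then (L:ℝ) else 0) + 2*L*(1/2:ℝ)^b) :=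
    Finset.sum_le_sum (fun b _ => hSb b)
  have step4 : ∑ b ∈ Finset.range R, ((if b ≤ B then (L:ℝ) else 0) + 2*L*(1/2:ℝ)^b)
      ≤ ((B:ℝ)+1) * L + 4*L := by
    rw [Finset.sum_add_distrib]
    have p1 : ∑ b ∈ Finset.range R, (if b ≤ B then (L:ℝ) else 0) ≤ ((B:ℝ)+1) * L := by
      rw [← Finset.sum_filter]
      rw [Finset.sum_const, nsmul_eq_mul]
      apply mul_le_mul_of_nonneg_right _ (Nat.cast_nonneg L)
      have hsub : (Finset.range R).filter (· ≤ B) ⊆ Finset.range (B+1) := by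
        intro b hb
        rw [Finset.mem_filter] at hb
        rw [Finset.mem_range]
        omega
      have := Finset.card_le_card hsub
      rw [Finset.card_range] at this
      exact_mod_cast this
    have p2 : ∑ b ∈ Finset.range R, 2*(L:ℝ)*(1/2:ℝ)^b ≤ 4*L := by
      rw [← Finset.mul_sum]
      calc 2*(L:ℝ) * ∑ b ∈ Finset.range R, (1/2:ℝ)^b ≤ 2*(L:ℝ) * 2 := by
            apply mul_le_mul_of_nonneg_left (sum_geometric_two_le R) (by positivity)
        _ = 4*L := by ring
    linarith
  calc ∑ n ∈ badF L M, (1/((n:ℝ)+1)) ≤ _ := step1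
    _ ≤ _ := step2
    _ ≤ _ := step3
    _ ≤ ((B:ℝ)+1) * L + 4*L := step4
    _ = ((Nat.log 2 (2*L) + 1) : ℝ) * L + 4*L := by push_cast; try ring

lemma sum_tgt (g : Xsp →ᵇ ℝ) (a : ℕ → ℝ) (M : ℕ) :
    ∑ n ∈ Finset.range M, a n * g (tgt n)
      = (∑ n ∈ (Finset.range M).filter (fun n => xAlt n = 0), a n) * g zeroBar
        + (∑ n ∈ Finset.range M, a n
            - ∑ n ∈ (Finset.range M).filter (fun n => xAlt n = 0), a n) * g oneBar := by
  rw [← Finset.sum_filter_add_sum_filter_not (Finset.range M) (fun n => xAlt n = 0)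
    (fun n => a n * g (tgt n))]
  have e0 : ∑ n ∈ (Finset.range M).filter (fun n => xAlt n = 0), a n * g (tgt n)
      = (∑ n ∈ (Finset.range M).filter (fun n => xAlt n = 0), a n) * g zeroBar := by
    rw [Finset.sum_mul]
    refine Finset.sum_congr rfl (fun n hn => ?_)
    rw [Finset.mem_filter] at hn
    rw [tgt, if_pos hn.2]
  have e1 : ∑ n ∈ (Finset.range M).filter (fun n => ¬ xAlt n = 0), a n * g (tgt n)
      = (∑ n ∈ (Finset.range M).filter (fun n => ¬ xAlt n = 0), a n) * g oneBar := by
    rw [Finset.sum_mul]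
    refine Finset.sum_congr rfl (fun n hn => ?_)
    rw [Finset.mem_filter] at hn
    rw [tgt, if_neg hn.2]
  rw [e0, e1]
  have e2 : ∑ n ∈ (Finset.range M).filter (fun n => ¬ xAlt n = 0), a n
      = ∑ n ∈ Finset.range M, a n
        - ∑ n ∈ (Finset.range M).filter (fun n => xAlt n = 0), a n := by
    have := Finset.sum_filter_add_sum_filter_not (Finset.range M) (fun n => xAlt n = 0)
      (fun n => a n)
    linarith
  rw [e2]

lemma main_est (g : Xsp →ᵇ ℝ) (ε : ℝ) (hε : 0 ≤ ε) (L : ℕ)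
    (hLp : ∀ n, Nat.log 2 (n+1) = Nat.log 2 (n+L) → |g (shift2^[n] xAlt) - g (tgt n)| ≤ ε)
    (a : ℕ → ℝ) (ha : ∀ n, 0 ≤ a n) (M : ℕ) :
    |∑ n ∈ Finset.range M, a n * g (shift2^[n] xAlt)
        - ((∑ n ∈ (Finset.range M).filter (fun n => xAlt n = 0), a n) * g zeroBar
          + (∑ n ∈ Finset.range M, a n
              - ∑ n ∈ (Finset.range M).filter (fun n => xAlt n = 0), a n) * g oneBar)|
      ≤ ε * (∑ n ∈ Finset.range M, a n) + (2*‖g‖) * ∑ n ∈ badF L M, a n := by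
  rw [← sum_tgt g a M, ← Finset.sum_sub_distrib]
  have e1 : ∀ n, a n * g (shift2^[n] xAlt) - a n * g (tgt n)
      = a n * (g (shift2^[n] xAlt) - g (tgt n)) := fun n => by ring
  calc |∑ n ∈ Finset.range M, (a n * g (shift2^[n] xAlt) - a n * g (tgt n))|
      ≤ ∑ n ∈ Finset.range M, |a n * (g (shift2^[n] xAlt) - g (tgt n))| := by
        rw [show (∑ n ∈ Finset.range M, (a n * g (shift2^[n] xAlt) - a n * g (tgt n)))
          = ∑ n ∈ Finset.range M, a n * (g (shift2^[n] xAlt) - g (tgt n)) from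
          Finset.sum_congr rfl (fun n _ => e1 n)]
        exact Finset.abs_sum_le_sum_abs _ _
    _ = ∑ n ∈ Finset.range M, a n * |g (shift2^[n] xAlt) - g (tgt n)| := by
        refine Finset.sum_congr rfl (fun n _ => ?_)
        rw [abs_mul, abs_of_nonneg (ha n)]
    _ ≤ ε * (∑ n ∈ Finset.range M, a n) + (2*‖g‖) * ∑ n ∈ badF L M, a n := by
        rw [← Finset.sum_filter_add_sum_filter_not (Finset.range M)
          (fun n => Nat.log 2 (n+1) = Nat.log 2 (n+L))
          (fun n => a n * |g (shift2^[n] xAlt) - g (tgt n)|)]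
        have hgood : ∑ n ∈ (Finset.range M).filter
            (fun n => Nat.log 2 (n+1) = Nat.log 2 (n+L)),
            a n * |g (shift2^[n] xAlt) - g (tgt n)|
            ≤ ε * (∑ n ∈ Finset.range M, a n) := by
          have h1 : ∑ n ∈ (Finset.range M).filter
              (fun n => Nat.log 2 (n+1) = Nat.log 2 (n+L)),
              a n * |g (shift2^[n] xAlt) - g (tgt n)|
              ≤ ∑ n ∈ (Finset.range M).filter
                (fun n => Nat.log 2 (n+1) = Nat.log 2 (n+L)), a n * ε := by
            apply Finset.sum_le_sum
            intro n hn
            rw [Finset.mem_filter] at hn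
            exact mul_le_mul_of_nonneg_left (hLp n hn.2) (ha n)
          calc _ ≤ _ := h1
            _ ≤ ∑ n ∈ Finset.range M, a n * ε := by
                apply Finset.sum_le_sum_of_subset_of_nonneg (Finset.filter_subset _ _)
                intro n _ _
                exact mul_nonneg (ha n) hε
            _ = ε * (∑ n ∈ Finset.range M, a n) := by rw [← Finset.sum_mul]; ring
        have hbad : ∑ n ∈ badF L M, a n * |g (shift2^[n] xAlt) - g (tgt n)|
            ≤ (2*‖g‖) * ∑ n ∈ badF L M, a n := by
          have h1 : ∑ n ∈ badF L M, a n * |g (shift2^[n] xAlt) - g (tgt n)|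
              ≤ ∑ n ∈ badF L M, a n * (2*‖g‖) := by
            apply Finset.sum_le_sum
            intro n _
            apply mul_le_mul_of_nonneg_left _ (ha n)
            have := g.dist_le_two_norm (shift2^[n] xAlt) (tgt n)
            rwa [Real.dist_eq] at this
          rw [← Finset.sum_mul] at h1
          calc _ ≤ _ := h1
            _ = (2*‖g‖) * ∑ n ∈ badF L M, a n := by ring
        have : badF L M = (Finset.range M).filter
            (fun n => ¬ (Nat.log 2 (n+1) = Nat.log 2 (n+L))) := rfl
        rw [← this]
        linarith

lemma zc_card (N : ℕ) : ((Finset.range N).filter (fun n => xAlt n = 0)).card = zc N := rfl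

lemma tendsto_of_est (u : ℕ → ℝ)
    (h : ∀ ε : ℝ, 0 < ε → ∃ D : ℕ → ℝ, Tendsto D atTop (𝓝 0) ∧ ∀ N, |u N| ≤ ε + D N) :
    Tendsto u atTop (𝓝 0) := by
  rw [NormedAddCommGroup.tendsto_nhds_zero]
  intro ε hε
  obtain ⟨D, hD, hbound⟩ := h (ε/2) (by linarith)
  have hD' := NormedAddCommGroup.tendsto_nhds_zero.mp hD (ε/2) (by linarith)
  filter_upwards [hD'] with N hN
  have h1 : |u N| ≤ ε/2 + D N := hbound N
  have h2 : D N ≤ |D N| := le_abs_self _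
  have h3 : ‖D N‖ = |D N| := rfl
  rw [h3] at hN
  calc ‖u N‖ = |u N| := rfl
    _ ≤ ε/2 + D N := h1
    _ ≤ ε/2 + |D N| := by linarith
    _ < ε/2 + ε/2 := by linarith
    _ = ε := by ring

lemma natlog_tendsto (c : ℕ) (hc : 1 ≤ c) :
    Tendsto (fun N : ℕ => ((Nat.log 2 (N + c) : ℝ) + 1)/((N:ℝ)+1)) atTop (𝓝 0) := by
  have hlog2 : (0:ℝ) < Real.log 2 := Real.log_pos (by norm_num)
  -- real-valued majorant
  have hx1 : Tendsto (fun x:ℝ => (x+1)⁻¹) atTop (𝓝 0) :=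
    tendsto_inv_atTop_zero.comp (tendsto_atTop_add_const_right _ 1 tendsto_id)
  have h1 : Tendsto (fun x:ℝ => Real.log x / x) atTop (𝓝 0) :=
    Real.isLittleO_log_id_atTop.tendsto_div_nhds_zero
  have h1c : Tendsto (fun x:ℝ => Real.log (x+c) / (x+c)) atTop (𝓝 0) :=
    h1.comp (tendsto_atTop_add_const_right _ (c:ℝ) tendsto_id)
  have h2 : Tendsto (fun x:ℝ => 1 + ((c:ℝ)-1) * (x+1)⁻¹) atTop (𝓝 1) := by
    have := (hx1.const_mul ((c:ℝ)-1)).const_add 1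
    simpa using this
  have hF : Tendsto (fun x:ℝ =>
      (Real.log (x+c)/(x+c)) * (1 + ((c:ℝ)-1) * (x+1)⁻¹) * (1/Real.log 2) + (x+1)⁻¹)
      atTop (𝓝 0) := by
    have := ((h1c.mul h2).mul_const (1/Real.log 2)).add hx1
    simpa using this
  have hFeq : ∀ᶠ x : ℝ in atTop,
      (Real.log (x+c)/(x+c)) * (1 + ((c:ℝ)-1) * (x+1)⁻¹) * (1/Real.log 2) + (x+1)⁻¹
        = (Real.logb 2 (x + c) + 1)/(x+1) := by
    filter_upwards [eventually_ge_atTop (1:ℝ)] with x hx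
    have hxc : (0:ℝ) < x + c := by
      have : (1:ℝ) ≤ (c:ℝ) := by exact_mod_cast hc
      linarith
    have hx1pos : (0:ℝ) < x + 1 := by linarith
    rw [Real.logb]
    field_simp
    ring
  have hFlogb : Tendsto (fun x:ℝ => (Real.logb 2 (x + c) + 1)/(x+1)) atTop (𝓝 0) :=
    hF.congr' hFeq
  have hcomp : Tendsto (fun N : ℕ => (Real.logb 2 ((N:ℝ) + c) + 1)/((N:ℝ)+1)) atTop (𝓝 0) :=
    hFlogb.comp tendsto_natCast_atTop_atTop
  apply squeeze_zero (fun N => by positivity) _ hcomp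
  intro N
  have hle : (Nat.log 2 (N + c) : ℝ) ≤ Real.logb 2 ((N:ℝ) + c) := by
    have := Real.natLog_le_logb (N + c) 2
    rwa [Nat.cast_add] at this
  gcongr <;> linarith

lemma cesaro_est (g : Xsp →ᵇ ℝ) (ε : ℝ) (hε : 0 < ε) :
    ∃ L : ℕ, 1 ≤ L ∧ ∀ N : ℕ,
      |(∫ y, g y ∂(cesaroEmp shift2 xAlt N : Measure Xsp))
          - (ff (N+1) * g zeroBar + (1 - ff (N+1)) * g oneBar)|
        ≤ ε + (2*‖g‖) * (((Nat.log 2 (N+1+L) : ℝ) + 1) * L)/((N:ℝ)+1) := by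
  obtain ⟨L, hL1, hLp⟩ := key_cont g ε hε
  refine ⟨L, hL1, fun N => ?_⟩
  have hN1 : (0:ℝ) < (N:ℝ)+1 := by positivity
  have hest := main_est g ε hε.le L hLp (fun _ => (1:ℝ)) (fun _ => zero_le_one) (N+1)
  -- identify the sums
  have hA : ∑ n ∈ Finset.range (N+1), (1:ℝ) = (N:ℝ)+1 := by
    rw [Finset.sum_const, Finset.card_range, nsmul_eq_mul, mul_one]
    push_cast
    try ring
  have hW : ∑ n ∈ (Finset.range (N+1)).filter (fun n => xAlt n = 0), (1:ℝ)
      = (zc (N+1) : ℝ) := by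
    rw [Finset.sum_const, nsmul_eq_mul, mul_one, zc_card]
  have hBad : ∑ n ∈ badF L (N+1), (1:ℝ) = ((badF L (N+1)).card : ℝ) := by
    rw [Finset.sum_const, nsmul_eq_mul, mul_one]
  rw [hA, hW, hBad] at hest
  have hsum : ∑ n ∈ Finset.range (N+1), (1:ℝ) * g (shift2^[n] xAlt)
      = ∑ n ∈ Finset.range (N+1), g (shift2^[n] xAlt) := by
    refine Finset.sum_congr rfl (fun n _ => by ring)
  rw [hsum] at hest
  -- divide by N+1
  have hint := integral_cesaro shift2 xAlt N g
  have hkey : (∫ y, g y ∂(cesaroEmp shift2 xAlt N : Measure Xsp))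
      - (ff (N+1) * g zeroBar + (1 - ff (N+1)) * g oneBar)
      = ((N:ℝ)+1)⁻¹ * ((∑ n ∈ Finset.range (N+1), g (shift2^[n] xAlt))
          - ((zc (N+1) : ℝ) * g zeroBar + (((N:ℝ)+1) - (zc (N+1):ℝ)) * g oneBar)) := by
    rw [hint, ff]
    have : ((N+1 : ℕ):ℝ) = (N:ℝ)+1 := by push_cast; ring
    rw [this]
    field_simp
    try ring
  rw [hkey, abs_mul, abs_of_nonneg (by positivity : (0:ℝ) ≤ ((N:ℝ)+1)⁻¹)]
  rw [inv_mul_le_iff₀ hN1]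
  calc |(∑ n ∈ Finset.range (N+1), g (shift2^[n] xAlt))
          - ((zc (N+1) : ℝ) * g zeroBar + (((N:ℝ)+1) - (zc (N+1):ℝ)) * g oneBar)|
      ≤ ε * ((N:ℝ)+1) + (2*‖g‖) * ((badF L (N+1)).card : ℝ) := hest
    _ ≤ (ε + (2*‖g‖) * (((Nat.log 2 (N+1+L) : ℝ) + 1) * L)/((N:ℝ)+1)) * ((N:ℝ)+1) := by
        have hcard : ((badF L (N+1)).card : ℝ) ≤ ((Nat.log 2 (N+1+L) : ℝ) + 1) * L := by
          have := bad_card L (N+1) hL1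
          calc ((badF L (N+1)).card : ℝ) ≤ ((Nat.log 2 (N+1+L) + 1) * L : ℕ) := by
                exact_mod_cast this
            _ = ((Nat.log 2 (N+1+L) : ℝ) + 1) * L := by push_cast; ring
        have hnorm : (0:ℝ) ≤ 2*‖g‖ := by positivity
        have h2 : (2*‖g‖) * ((badF L (N+1)).card : ℝ)
            ≤ (2*‖g‖) * (((Nat.log 2 (N+1+L) : ℝ) + 1) * L) := by
          exact mul_le_mul_of_nonneg_left hcard hnorm
        have h3 : ((2*‖g‖) * (((Nat.log 2 (N+1+L) : ℝ) + 1) * L)/((N:ℝ)+1)) * ((N:ℝ)+1)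
            = (2*‖g‖) * (((Nat.log 2 (N+1+L) : ℝ) + 1) * L) := by
          field_simp
        rw [add_mul, h3]
        linarith
    _ = ((N:ℝ)+1) * (ε + (2*‖g‖) * (((Nat.log 2 (N+1+L) : ℝ) + 1) * L)/((N:ℝ)+1)) := by
        ring

lemma cesaro_tendsto (s : ℕ → ℕ) (hs : Tendsto s atTop atTop) (α : ℝ≥0) (hα : α ≤ 1)
    (hr : Tendsto (fun j => ff (s j + 1)) atTop (𝓝 (α:ℝ))) :
    Tendsto (fun j => cesaroEmp shift2 xAlt (s j)) atTop (𝓝 (mix α hα)) := by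
  rw [MeasureTheory.ProbabilityMeasure.tendsto_iff_forall_integral_tendsto]
  intro g
  have hmixint := integral_mix α hα g
  have hcoe : ((1 - α : ℝ≥0) : ℝ) = 1 - (α:ℝ) := by
    rw [NNReal.coe_sub hα]
    norm_num
  rw [show (∫ y, g y ∂((mix α hα) : Measure Xsp))
      = (α : ℝ) * g zeroBar + (1 - (α:ℝ)) * g oneBar from by rw [hmixint, hcoe]]
  have hmain : Tendsto (fun j => ff (s j + 1) * g zeroBar + (1 - ff (s j + 1)) * g oneBar)
      atTop (𝓝 ((α:ℝ) * g zeroBar + (1 - (α:ℝ)) * g oneBar)) := by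
    exact (hr.mul_const _).add ((tendsto_const_nhds.sub hr).mul_const _)
  have herr : Tendsto (fun j => (∫ y, g y ∂(cesaroEmp shift2 xAlt (s j) : Measure Xsp))
      - (ff (s j + 1) * g zeroBar + (1 - ff (s j + 1)) * g oneBar)) atTop (𝓝 0) := by
    apply tendsto_of_est
    intro ε hε
    obtain ⟨L, hL1, hest⟩ := cesaro_est g ε hε
    refine ⟨fun j => (2*‖g‖) * (((Nat.log 2 (s j+1+L) : ℝ) + 1) * L)/((s j:ℝ)+1), ?_,
      fun j => hest (s j)⟩
    have hD0 : Tendsto (fun N : ℕ =>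
        (2*‖g‖) * (((Nat.log 2 (N+1+L) : ℝ) + 1) * L)/((N:ℝ)+1)) atTop (𝓝 0) := by
      have h := natlog_tendsto (1+L) (by omega)
      have h2 := h.const_mul ((2*‖g‖) * (L:ℝ))
      rw [mul_zero] at h2
      apply h2.congr
      intro N
      rw [show N + (1+L) = N+1+L from by omega]
      ring
    exact hD0.comp hs
  have hfinal := hmain.add herr
  rw [add_zero] at hfinal
  apply hfinal.congr
  intro j
  ring

lemma hw_def (N : ℕ) : hw N = ∑ n ∈ Finset.range N, (1/((n:ℝ)+1)) := rfl
lemma ww_def (N : ℕ) : ww N = ∑ n ∈ Finset.range N, (if xAlt n = 0 then (1/((n:ℝ)+1)) else 0) := rfl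

lemma ww_filter (N : ℕ) :
    ww N = ∑ n ∈ (Finset.range N).filter (fun n => xAlt n = 0), (1/((n:ℝ)+1)) := by
  rw [ww_def, Finset.sum_filter]

lemma log_est (g : Xsp →ᵇ ℝ) (ε : ℝ) (hε : 0 < ε) :
    ∃ L : ℕ, 1 ≤ L ∧ ∀ N : ℕ,
      |(∫ y, g y ∂(logEmp shift2 xAlt N : Measure Xsp))
          - ((ww (N+1)/hw (N+1)) * g zeroBar + (1 - ww (N+1)/hw (N+1)) * g oneBar)|
        ≤ ε + (2*‖g‖) * (((Nat.log 2 (2*L) : ℝ) + 1) * L + 4*L)/(hw (N+1)) := by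
  obtain ⟨L, hL1, hLp⟩ := key_cont g ε hε
  refine ⟨L, hL1, fun N => ?_⟩
  have hhw : (1:ℝ) ≤ hw (N+1) := hw_one_le (N+1) (by omega)
  have hhwpos : (0:ℝ) < hw (N+1) := by linarith
  have hest := main_est g ε hε.le L hLp (fun n => (1/((n:ℝ)+1)))
    (fun n => by positivity) (N+1)
  rw [← hw_def (N+1), ← ww_filter (N+1)] at hest
  have hint := integral_logEmp xAlt N g
  rw [← hw_def (N+1)] at hint
  have hkey : (∫ y, g y ∂(logEmp shift2 xAlt N : Measure Xsp))
      - ((ww (N+1)/hw (N+1)) * g zeroBar + (1 - ww (N+1)/hw (N+1)) * g oneBar)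
      = (hw (N+1))⁻¹ * ((∑ n ∈ Finset.range (N+1), (1/((n:ℝ)+1)) * g (shift2^[n] xAlt))
          - ((ww (N+1)) * g zeroBar + ((hw (N+1)) - ww (N+1)) * g oneBar)) := by
    rw [hint]
    field_simp
    try ring
  rw [hkey, abs_mul, abs_of_nonneg (by positivity : (0:ℝ) ≤ (hw (N+1))⁻¹)]
  rw [inv_mul_le_iff₀ hhwpos]
  have hbadsum : ∑ n ∈ badF L (N+1), (1/((n:ℝ)+1))
      ≤ ((Nat.log 2 (2*L) : ℝ) + 1) * L + 4*L := by
    have := bad_hsum L (N+1) hL1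
    calc ∑ n ∈ badF L (N+1), (1/((n:ℝ)+1))
        ≤ ((Nat.log 2 (2*L) + 1 : ℕ) : ℝ) * L + 4*L := by
          refine le_trans this ?_
          push_cast
          try ring_nf
          try linarith
      _ = ((Nat.log 2 (2*L) : ℝ) + 1) * L + 4*L := by push_cast; try ring
  calc |(∑ n ∈ Finset.range (N+1), (1/((n:ℝ)+1)) * g (shift2^[n] xAlt))
          - ((ww (N+1)) * g zeroBar + ((hw (N+1)) - ww (N+1)) * g oneBar)|
      ≤ ε * (hw (N+1)) + (2*‖g‖) * ∑ n ∈ badF L (N+1), (1/((n:ℝ)+1)) := hest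
    _ ≤ hw (N+1) * (ε + (2*‖g‖) * (((Nat.log 2 (2*L) : ℝ) + 1) * L + 4*L)/(hw (N+1))) := by
        have hnorm : (0:ℝ) ≤ 2*‖g‖ := by positivity
        have h2 : (2*‖g‖) * ∑ n ∈ badF L (N+1), (1/((n:ℝ)+1))
            ≤ (2*‖g‖) * (((Nat.log 2 (2*L) : ℝ) + 1) * L + 4*L) :=
          mul_le_mul_of_nonneg_left hbadsum hnorm
        have h3 : hw (N+1) * ((2*‖g‖) * (((Nat.log 2 (2*L) : ℝ) + 1) * L + 4*L)/(hw (N+1)))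
            = (2*‖g‖) * (((Nat.log 2 (2*L) : ℝ) + 1) * L + 4*L) := by
          field_simp
        rw [mul_add, h3]
        have h4 : hw (N+1) * ε = ε * hw (N+1) := by ring
        linarith

lemma log_tendsto_main :
    Tendsto (fun N => logEmp shift2 xAlt N) atTop
      (𝓝 (mix (1/2) (by norm_num : (1/2 : ℝ≥0) ≤ 1))) := by
  rw [MeasureTheory.ProbabilityMeasure.tendsto_iff_forall_integral_tendsto]
  intro g
  have hmixint := integral_mix (1/2) (by norm_num) g
  have hcoe : ((1 - (1/2 : ℝ≥0) : ℝ≥0) : ℝ) = 1 - ((1/2 : ℝ≥0):ℝ) := by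
    rw [NNReal.coe_sub (by norm_num), NNReal.coe_one]
  have hhalf : ((1/2 : ℝ≥0) : ℝ) = (1/2 : ℝ) := by norm_num
  rw [show (∫ y, g y ∂((mix (1/2) (by norm_num)) : Measure Xsp))
      = (1/2 : ℝ) * g zeroBar + (1 - (1/2:ℝ)) * g oneBar from by
    rw [hmixint, hcoe, hhalf]]
  have hsucc : Tendsto (fun N : ℕ => N + 1) atTop atTop := tendsto_add_atTop_nat 1
  have hρ : Tendsto (fun N : ℕ => ww (N+1)/hw (N+1)) atTop (𝓝 (1/2)) :=
    ratio_tendsto_half.comp hsucc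
  have hmain : Tendsto (fun N => (ww (N+1)/hw (N+1)) * g zeroBar
      + (1 - ww (N+1)/hw (N+1)) * g oneBar)
      atTop (𝓝 ((1/2:ℝ) * g zeroBar + (1 - (1/2:ℝ)) * g oneBar)) :=
    (hρ.mul_const _).add ((tendsto_const_nhds.sub hρ).mul_const _)
  have herr : Tendsto (fun N => (∫ y, g y ∂(logEmp shift2 xAlt N : Measure Xsp))
      - ((ww (N+1)/hw (N+1)) * g zeroBar + (1 - ww (N+1)/hw (N+1)) * g oneBar))
      atTop (𝓝 0) := by
    apply tendsto_of_est
    intro ε hε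
    obtain ⟨L, hL1, hest⟩ := log_est g ε hε
    refine ⟨fun N => (2*‖g‖) * (((Nat.log 2 (2*L) : ℝ) + 1) * L + 4*L)/(hw (N+1)), ?_,
      fun N => hest N⟩
    exact Tendsto.div_atTop tendsto_const_nhds (hw_tendsto.comp hsucc)
  have hfinal := hmain.add herr
  rw [add_zero] at hfinal
  apply hfinal.congr
  intro N
  ring


lemma cesaro_limitSet_eq :
    cesaroLimitSet shift2 xAlt =
      {ν : ProbabilityMeasure Xsp | ∃ α : ℝ≥0, 1 / 3 ≤ α ∧ α ≤ 2 / 3 ∧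
        ν.toMeasure = (α : ℝ≥0∞) • Measure.dirac zeroBar +
          ((1 - α : ℝ≥0) : ℝ≥0∞) • Measure.dirac oneBar} := by
  ext ν
  constructor
  · rintro ⟨φ, hφ, hlim⟩
    set u : ℕ → ℝ := fun j => ff (φ j + 1) with hu
    have hφat : Tendsto φ atTop atTop := hφ.tendsto_atTop
    have humem : ∀ j, u j ∈ Set.Icc (0:ℝ) 1 := by
      intro j
      have h1 := ff_lb (φ j + 1) (by omega)
      have h2 := ff_ub (φ j + 1) (by omega)
      have h3 : (1:ℝ) ≤ ((φ j : ℝ) + 1) := by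
        have : (0:ℝ) ≤ (φ j : ℝ) := Nat.cast_nonneg _
        linarith
      have h4 : 1/(3*((φ j : ℝ)+1)) ≤ 1/3 := by
        apply div_le_div_of_nonneg_left (by norm_num) (by norm_num) (by linarith)
      constructor
      · have hc : ((φ j + 1 : ℕ):ℝ) = (φ j : ℝ) + 1 := by push_cast; ring
        rw [hu]; dsimp only; linarith
      · have hc : ((φ j + 1 : ℕ):ℝ) = (φ j : ℝ) + 1 := by push_cast; ring
        rw [hu]; dsimp only
        rw [hc] at h2
        linarith
    obtain ⟨c, hcmem, ψ, hψ, hconv⟩ :=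
      IsCompact.tendsto_subseq (isCompact_Icc : IsCompact (Set.Icc (0:ℝ) 1)) humem
    have hψat : Tendsto ψ atTop atTop := hψ.tendsto_atTop
    have hc13 : 1/3 ≤ c := by
      apply ge_of_tendsto hconv
      filter_upwards with j
      have := ff_lb (φ (ψ j) + 1) (by omega)
      exact this
    have hc23 : c ≤ 2/3 := by
      have hub : Tendsto (fun j => 2/3 + 1/(3*(((φ (ψ j) : ℝ))+1))) atTop (𝓝 (2/3)) := by
        have h0 : Tendsto (fun m : ℕ => 1/(3*(((m : ℝ))+1))) atTop (𝓝 0) := by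
          have h1 : Tendsto (fun m : ℕ => ((m:ℝ)+1)) atTop atTop :=
            tendsto_atTop_add_const_right _ 1 tendsto_natCast_atTop_atTop
          have h2 : Tendsto (fun m : ℕ => 3*(((m : ℝ))+1)) atTop atTop :=
            Tendsto.const_mul_atTop (by norm_num) h1
          exact Tendsto.div_atTop tendsto_const_nhds h2
        have := (h0.comp (hφat.comp hψat)).const_add (2/3 : ℝ)
        simpa using this
      apply le_of_tendsto_of_tendsto' hconv hub
      intro j
      have h2 := ff_ub (φ (ψ j) + 1) (by omega)
      have hc : ((φ (ψ j) + 1 : ℕ):ℝ) = (φ (ψ j) : ℝ) + 1 := by push_cast; ring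
      rw [hc] at h2
      exact h2
    have hc0 : 0 ≤ c := le_trans (by norm_num) hc13
    set α : ℝ≥0 := ⟨c, hc0⟩ with hαdef
    have hαc : (α : ℝ) = c := rfl
    have hα : α ≤ 1 := by
      rw [← NNReal.coe_le_coe, hαc, NNReal.coe_one]
      linarith
    have happ := cesaro_tendsto (φ ∘ ψ) (hφat.comp hψat) α hα (by rw [hαc]; exact hconv)
    have hlim2 : Tendsto (fun j => cesaroEmp shift2 xAlt ((φ ∘ ψ) j)) atTop (𝓝 ν) :=
      hlim.comp hψat
    have hνeq : ν = mix α hα := tendsto_nhds_unique hlim2 happ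
    refine ⟨α, ?_, ?_, ?_⟩
    · rw [← NNReal.coe_le_coe, hαc]
      norm_num
      linarith [hc13]
    · rw [← NNReal.coe_le_coe, hαc]
      norm_num
      linarith [hc23]
    · rw [hνeq]
      rfl
  · rintro ⟨α, h13, h23, hν⟩
    have hα : α ≤ 1 := le_trans h23 (by rw [← NNReal.coe_le_coe]; norm_num)
    set c : ℝ := (α : ℝ) with hcdef
    have hc13 : 1/3 ≤ c := by
      have := NNReal.coe_le_coe.mpr h13
      calc (1/3 : ℝ) = ((1/3 : ℝ≥0) : ℝ) := by norm_num
        _ ≤ c := this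
    have hc23 : c ≤ 2/3 := by
      have := NNReal.coe_le_coe.mpr h23
      calc c ≤ ((2/3 : ℝ≥0) : ℝ) := this
        _ = (2/3 : ℝ) := by norm_num
    obtain ⟨M, hM, hMlb, hMtend⟩ := exists_freq_subseq c hc13 hc23
    have hM3 : ∀ k, 3 ≤ M k := by
      intro k
      have := hMlb k
      have h4 : (4:ℕ) ≤ 4^(k+1) := by
        calc (4:ℕ) = 4^1 := by norm_num
        _ ≤ 4^(k+1) := Nat.pow_le_pow_right (by norm_num) (by omega)
      omega
    set φ : ℕ → ℕ := fun k => M k - 1 with hφdef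
    have hφmono : StrictMono φ := by
      intro a b hab
      have := hM hab
      have h3 := hM3 a
      have h3' := hM3 b
      rw [hφdef]
      dsimp only
      omega
    have hφeq : ∀ k, φ k + 1 = M k := fun k => by
      have := hM3 k
      rw [hφdef]
      dsimp only
      omega
    have happ := cesaro_tendsto φ hφmono.tendsto_atTop α hα (by
      have : (fun k => ff (φ k + 1)) = fun k => ff (M k) := by
        funext k
        rw [hφeq k]
      rw [this, ← hcdef]
      exact hMtend)
    have hνeq : ν = mix α hα := by
      apply Subtype.ext
      exact hν
    refine ⟨φ, hφmono, ?_⟩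
    rw [hνeq]
    exact happ

lemma mix_half_toMeasure :
    (mix (1/2) (by rw [← NNReal.coe_le_coe]; norm_num)).toMeasure
      = (2 : ℝ≥0∞)⁻¹ • Measure.dirac zeroBar + (2 : ℝ≥0∞)⁻¹ • Measure.dirac oneBar := by
  have h1 : (((1/2 : ℝ≥0)) : ℝ≥0∞) = (2 : ℝ≥0∞)⁻¹ := by
    rw [one_div, ENNReal.coe_inv (by norm_num)]
    norm_num
  have h2 : ((1 - (1/2 : ℝ≥0) : ℝ≥0) : ℝ≥0∞) = (2 : ℝ≥0∞)⁻¹ := by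
    rw [show (1 - (1/2 : ℝ≥0) : ℝ≥0) = 1/2 from by
      rw [← NNReal.coe_inj]
      rw [NNReal.coe_sub (by rw [← NNReal.coe_le_coe]; norm_num)]
      norm_num]
    exact h1
  show ((1/2 : ℝ≥0) : ℝ≥0∞) • Measure.dirac zeroBar
      + ((1 - (1/2:ℝ≥0) : ℝ≥0) : ℝ≥0∞) • Measure.dirac oneBar = _
  rw [h1, h2]

lemma log_limitSet_eq :
    logLimitSet shift2 xAlt =
      {ν : ProbabilityMeasure Xsp |
        ν.toMeasure = (2 : ℝ≥0∞)⁻¹ • Measure.dirac zeroBar +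
          (2 : ℝ≥0∞)⁻¹ • Measure.dirac oneBar} := by
  have hhalf : (1/2 : ℝ≥0) ≤ 1 := by rw [← NNReal.coe_le_coe]; norm_num
  ext ν
  constructor
  · rintro ⟨φ, hφ, hlim⟩
    have hcomp : Tendsto (fun j => logEmp shift2 xAlt (φ j)) atTop
        (𝓝 (mix (1/2) hhalf)) := log_tendsto_main.comp hφ.tendsto_atTop
    have hνeq : ν = mix (1/2) hhalf := tendsto_nhds_unique hlim hcomp
    rw [Set.mem_setOf_eq, hνeq]
    exact mix_half_toMeasure
  · intro hν
    rw [Set.mem_setOf_eq] at hν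
    have hνeq : ν = mix (1/2) hhalf := by
      apply Subtype.ext
      exact hν.trans mix_half_toMeasure.symm
    refine ⟨id, strictMono_id, ?_⟩
    rw [hνeq]
    have : ((fun N => logEmp shift2 xAlt N) ∘ id) = fun N => logEmp shift2 xAlt N := rfl
    rw [this]
    exact log_tendsto_main

lemma mix_mem_cesaro (α : ℝ≥0) (h13 : 1/3 ≤ α) (h23 : α ≤ 2/3)
    (hα : α ≤ 1) : mix α hα ∈ cesaroLimitSet shift2 xAlt := by
  rw [cesaro_limitSet_eq]
  exact ⟨α, h13, h23, rfl⟩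

lemma third_le : (1/3 : ℝ≥0) ≤ 1/2 ∧ (1/2:ℝ≥0) ≤ 2/3 ∧ (1/3:ℝ≥0) ≤ 1/3 ∧ (1/3:ℝ≥0) ≤ 2/3 := by
  refine ⟨?_, ?_, le_rfl, ?_⟩ <;> rw [← NNReal.coe_le_coe] <;> norm_num

lemma log_ssubset_cesaro : logLimitSet shift2 xAlt ⊂ cesaroLimitSet shift2 xAlt := by
  have hhalf : (1/2 : ℝ≥0) ≤ 1 := by rw [← NNReal.coe_le_coe]; norm_num
  have hthird : (1/3 : ℝ≥0) ≤ 1 := by rw [← NNReal.coe_le_coe]; norm_num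
  constructor
  · -- subset
    intro ν hν
    rw [log_limitSet_eq, Set.mem_setOf_eq] at hν
    have hνeq : ν = mix (1/2) hhalf := by
      apply Subtype.ext
      exact hν.trans mix_half_toMeasure.symm
    rw [hνeq]
    exact mix_mem_cesaro (1/2) third_le.1 third_le.2.1 hhalf
  · -- not superset
    intro hsup
    have hmem : mix (1/3) hthird ∈ cesaroLimitSet shift2 xAlt :=
      mix_mem_cesaro (1/3) third_le.2.2.1 third_le.2.2.2 hthird
    have hmem2 := hsup hmem
    rw [log_limitSet_eq, Set.mem_setOf_eq] at hmem2
    -- evaluate both measures on the cylinder {y | y 0 = 0}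
    set A : Set Xsp := (fun y : Xsp => y 0) ⁻¹' {0} with hA
    have hAm : MeasurableSet A := (measurable_pi_apply 0) (measurableSet_singleton 0)
    have hz : zeroBar ∈ A := by
      simp [hA, zeroBar]
    have ho : oneBar ∉ A := by
      simp [hA, oneBar]
    have hval1 : (mix (1/3) hthird).toMeasure A = ((1/3 : ℝ≥0) : ℝ≥0∞) := by
      show (((1/3 : ℝ≥0) : ℝ≥0∞) • Measure.dirac zeroBar
        + ((1 - (1/3:ℝ≥0) : ℝ≥0) : ℝ≥0∞) • Measure.dirac oneBar) A = _
      rw [Measure.add_apply, Measure.smul_apply, Measure.smul_apply,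
        Measure.dirac_apply' _ hAm, Measure.dirac_apply' _ hAm]
      rw [Set.indicator_of_mem hz, Set.indicator_of_notMem ho]
      simp
    have hval2 : ((2 : ℝ≥0∞)⁻¹ • Measure.dirac zeroBar
        + (2 : ℝ≥0∞)⁻¹ • Measure.dirac oneBar : Measure Xsp) A = (2 : ℝ≥0∞)⁻¹ := by
      rw [Measure.add_apply, Measure.smul_apply, Measure.smul_apply,
        Measure.dirac_apply' _ hAm, Measure.dirac_apply' _ hAm]
      rw [Set.indicator_of_mem hz, Set.indicator_of_notMem ho]
      simp
    rw [hmem2] at hval1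
    rw [hval2] at hval1
    -- 2⁻¹ = 1/3 : contradiction
    have : ((2 : ℝ≥0∞)⁻¹).toReal = (((1/3 : ℝ≥0) : ℝ≥0∞)).toReal := by rw [hval1]
    rw [ENNReal.toReal_inv] at this
    norm_num at this

/-- For the point `x = 0 11 0000 1111 1111 …` of the full shift on
`{0,1}`, the Cesàro limit set is `{α·δ_0̄ + (1-α)·δ_1̄ : 1/3 ≤ α ≤ 2/3}` while the
harmonic limit set is the single measure `(1/2)·δ_0̄ + (1/2)·δ_1̄`; in particular
`V^log(x) ⊊ V(x)`. -/
theorem limitSets_of_xAlt :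
    cesaroLimitSet shift2 xAlt =
        {ν : ProbabilityMeasure (ℕ → Fin 2) | ∃ α : ℝ≥0, 1 / 3 ≤ α ∧ α ≤ 2 / 3 ∧
          ν.toMeasure = (α : ℝ≥0∞) • Measure.dirac zeroBar +
            ((1 - α : ℝ≥0) : ℝ≥0∞) • Measure.dirac oneBar} ∧
      logLimitSet shift2 xAlt =
        {ν : ProbabilityMeasure (ℕ → Fin 2) |
          ν.toMeasure = (2 : ℝ≥0∞)⁻¹ • Measure.dirac zeroBar +
            (2 : ℝ≥0∞)⁻¹ • Measure.dirac oneBar} ∧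
      logLimitSet shift2 xAlt ⊂ cesaroLimitSet shift2 xAlt := by
  exact ⟨cesaro_limitSet_eq, log_limitSet_eq, log_ssubset_cesaro⟩
end

section
/- Define x = (x_n)_{n≥0} ∈ {0,1,2}^ℕ by x_n = r (for r ∈ {0,1,2}) whenever 3^{3k+r} ≤ n+1 < 3^{3k+r+1} for some k ≥ 0. Then for every ν ∈ V(x) there exists q ∈ {0,1,2} such that ν({y : y_0 = q}) ≤ 3/13 < 1/3. In particular no ν ∈ V(x) gives each of the three cylinders {y : y_0 = 0}, {y : y_0 = 1}, {y : y_0 = 2} measure 1/3. -/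
open MeasureTheory Filter Topology
open scoped ENNReal NNReal Classical

/-- The left shift on `{0,1,2}^ℕ`. -/
def shift3 : (ℕ → Fin 3) → (ℕ → Fin 3) := fun y n => y (n + 1)

/-- The point `x = 00 111111 2^18 0^54 … ∈ {0,1,2}^ℕ`: `x_n = r` whenever
`3^(3k+r) ≤ n+1 < 3^(3k+r+1)` for some `k ≥ 0` (`r ∈ {0,1,2}`). -/
noncomputable def xTri : ℕ → Fin 3 := fun n =>
  if ∃ k : ℕ, 3 ^ (3 * k) ≤ n + 1 ∧ n + 1 < 3 ^ (3 * k + 1) then 0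
  else if ∃ k : ℕ, 3 ^ (3 * k + 1) ≤ n + 1 ∧ n + 1 < 3 ^ (3 * k + 2) then 1
  else 2

/-! The symbol `x_n` is `⌊log₃ (n + 1)⌋ mod 3`, so `x` consists of blocks `[3^i - 1, 3^(i+1) - 1)`
of lengths `2·3^i` with the letters `0, 1, 2` in cyclic order. Among the first `M` symbols, with
`j = ⌊log₃ M⌋`, the letter `≡ j + 1` occurs last on block `j - 2`, then on blocks `j - 5, j - 8, …`,
so at most `2·3^(j-2)·(1 + 1/27 + …) ≤ 3^(j+1)/13 ≤ 3M/13` times. By pigeonhole a single letter `q`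
has frequency `≤ 3/13` along infinitely many terms of any subsequence, and since the cylinder
`{y | y 0 = q}` is open, the portmanteau theorem passes this bound to the limit. -/

open Finset

lemma shift3_iterate_apply_zero (n : ℕ) (y : ℕ → Fin 3) : (shift3^[n] y) 0 = y n := by
  induction n generalizing y with
  | zero => rfl
  | succ n ih => exact ih (shift3 y)

lemma Nat.log_mod_eq_iff_exists {b c r m : ℕ} (hb : 1 < b) (hm : m ≠ 0) (hr : r < c) :
    Nat.log b m % c = r ↔ ∃ k, b ^ (c * k + r) ≤ m ∧ m < b ^ (c * k + r + 1) := by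
  simp only [← Nat.log_eq_iff (Or.inr ⟨hb, hm⟩)]
  constructor
  · intro h
    exact ⟨Nat.log b m / c, by rw [← h, Nat.div_add_mod]⟩
  · rintro ⟨k, hk⟩
    rw [hk, Nat.mul_add_mod, Nat.mod_eq_of_lt hr]

lemma xTri_val (n : ℕ) : (xTri n : ℕ) = Nat.log 3 (n + 1) % 3 := by
  have log_mod_iff (r : ℕ) (hr : r < 3) :=
    Nat.log_mod_eq_iff_exists (b := 3) (by norm_num) n.add_one_ne_zero hr
  unfold xTri
  split_ifs with h0 h1
  · exact ((log_mod_iff 0 (by norm_num)).2 h0).symm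
  · exact ((log_mod_iff 1 (by norm_num)).2 h1).symm
  · have h0' := mt (log_mod_iff 0 (by norm_num)).1 h0
    have h1' := mt (log_mod_iff 1 (by norm_num)).1 h1
    show 2 = _
    omega

def log3ResidueSet (r N : ℕ) : Finset ℕ :=
  (Ico 1 N).filter fun m => Nat.log 3 m % 3 = r

lemma log3ResidueSet_subset_union (j : ℕ) :
    log3ResidueSet ((j + 3 + 1) % 3) (3 ^ (j + 3 + 1)) ⊆
      log3ResidueSet ((j + 1) % 3) (3 ^ (j + 1)) ∪ Ico (3 ^ (j + 1)) (3 ^ (j + 2)) := by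
  intro m hm
  simp only [log3ResidueSet, mem_filter, mem_Ico, mem_union] at hm ⊢
  obtain ⟨⟨hm1, hlt⟩, hmod⟩ := hm
  have hm0 : m ≠ 0 := by omega
  have hlog : Nat.log 3 m < j + 4 := (Nat.log_lt_iff_lt_pow (by norm_num) hm0).2 hlt
  by_cases hlow : Nat.log 3 m < j + 1
  · exact .inl ⟨⟨hm1, (Nat.log_lt_iff_lt_pow (by norm_num) hm0).1 hlow⟩, by omega⟩
  · exact .inr ((Nat.log_eq_iff (Or.inr ⟨by norm_num, hm0⟩)).1 (by omega))

lemma card_log3ResidueSet_le (j : ℕ) :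
    13 * (log3ResidueSet ((j + 1) % 3) (3 ^ (j + 1))).card ≤ 3 ^ (j + 1) := by
  induction j using Nat.strong_induction_on with
  | _ j ih =>
  match j with
  | 0 | 1 | 2 => decide
  | j + 3 =>
    have hcard := (card_le_card (log3ResidueSet_subset_union j)).trans (card_union_le _ _)
    have := ih j (by omega)
    rw [Nat.card_Ico] at hcard
    have h2 : 3 ^ (j + 2) = 3 * 3 ^ (j + 1) := by ring
    have h4 : 3 ^ (j + 3 + 1) = 27 * 3 ^ (j + 1) := by ring
    omega

lemma exists_card_filter_xTri_eq_le (N : ℕ) :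
    ∃ q : Fin 3, 13 * ((range (N + 1)).filter fun n => xTri n = q).card ≤ 3 * (N + 1) := by
  set j := Nat.log 3 (N + 1)
  let q : Fin 3 := ⟨(j + 1) % 3, Nat.mod_lt _ (by norm_num)⟩
  refine ⟨q, ?_⟩
  have hN : N + 1 < 3 ^ (j + 1) := Nat.lt_pow_succ_log_self (by norm_num) _
  have hmaps : Set.MapsTo (· + 1) ((range (N + 1)).filter fun n => xTri n = q)
      (log3ResidueSet ((j + 1) % 3) (3 ^ (j + 1))) := by
    intro n hn
    simp only [coe_filter, Set.mem_ofPred_eq, mem_range, Fin.ext_iff, xTri_val] at hn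
    simp only [log3ResidueSet, coe_filter, mem_Ico, Set.mem_ofPred_eq]
    exact ⟨⟨by omega, by omega⟩, hn.2⟩
  have hcard := card_le_card_of_injOn _ hmaps (add_left_injective 1).injOn
  have hpow : 3 ^ (j + 1) ≤ 3 * (N + 1) := by
    rw [pow_succ']
    exact Nat.mul_le_mul_left 3 (Nat.pow_log_le_self 3 N.succ_ne_zero)
  have := card_log3ResidueSet_le j
  omega

lemma cesaroEmp_apply {X : Type*} [MeasurableSpace X] (T : X → X) (x : X) (N : ℕ) {s : Set X}
    (hs : MeasurableSet s) :
    (cesaroEmp T x N : Measure X) s =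
      ((range (N + 1)).filter fun n => T^[n] x ∈ s).card / (N + 1) := by
  change ((N + 1 : ℝ≥0∞)⁻¹ • ∑ n ∈ range (N + 1), Measure.dirac (T^[n] x)) s = _
  rw [Measure.smul_apply, Measure.finsetSum_apply, smul_eq_mul, ENNReal.div_eq_inv_mul]
  simp only [Measure.dirac_apply' _ hs, Set.indicator_apply, Pi.one_apply, sum_boole]

lemma ENNReal.natCast_div_le_natCast_div {a b c d : ℕ} (hd : d ≠ 0) (h : a * d ≤ c * b) :
    (a / b : ℝ≥0∞) ≤ c / d := by
  refine ENNReal.div_le_of_le_mul ?_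
  rw [← ENNReal.mul_div_right_comm, ENNReal.le_div_iff_mul_le (by simp [hd]) (by simp)]
  exact_mod_cast h

lemma ProbabilityMeasure.measure_le_of_tendsto_of_frequently_le {Ω ι : Type*} [MeasurableSpace Ω]
    [TopologicalSpace Ω] [OpensMeasurableSpace Ω] [HasOuterApproxClosed Ω] {L : Filter ι}
    {μ : ProbabilityMeasure Ω} {μs : ι → ProbabilityMeasure Ω} (hμs : Tendsto μs L (𝓝 μ))
    {G : Set Ω} (hG : IsOpen G) {c : ℝ≥0∞} (hc : ∃ᶠ i in L, (μs i : Measure Ω) G ≤ c) :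
    (μ : Measure Ω) G ≤ c :=
  (ProbabilityMeasure.le_liminf_measure_open_of_tendsto hμs hG).trans
    (liminf_le_of_frequently_le' hc)

lemma isOpen_setOf_apply_zero_eq (q : Fin 3) : IsOpen {y : ℕ → Fin 3 | y 0 = q} :=
  (isOpen_discrete {q}).preimage (continuous_apply (A := fun _ : ℕ => Fin 3) 0)

lemma cesaroEmp_shift3_xTri_le (N : ℕ) (q : Fin 3)
    (hq : 13 * ((range (N + 1)).filter fun n => xTri n = q).card ≤ 3 * (N + 1)) :
    (cesaroEmp shift3 xTri N : Measure (ℕ → Fin 3)) {y | y 0 = q} ≤ 3 / 13 := by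
  rw [cesaroEmp_apply _ _ _ (isOpen_setOf_apply_zero_eq q).measurableSet]
  simp only [Set.mem_ofPred_eq, shift3_iterate_apply_zero]
  exact_mod_cast ENNReal.natCast_div_le_natCast_div (b := N + 1) (c := 3) (d := 13)
    (by norm_num) (by omega)

/-- For the point `x = 00 111111 2^18 0^54 …` of the full shift on
`{0,1,2}`, every `ν ∈ V(x)` gives some one-letter cylinder `{y : y_0 = q}` measure at
most `3/13 < 1/3`; in particular no `ν ∈ V(x)` gives all three one-letter cylinders
measure `1/3`. -/
theorem cesaroLimitSet_of_xTri_small_cylinder (ν : ProbabilityMeasure (ℕ → Fin 3))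
    (hν : ν ∈ cesaroLimitSet shift3 xTri) :
    (∃ q : Fin 3, ν.toMeasure {y | y 0 = q} ≤ 3 / 13 ∧ (3 / 13 : ℝ≥0∞) < 1 / 3) ∧
      ¬ ∀ q : Fin 3, ν.toMeasure {y | y 0 = q} = 1 / 3 := by
  obtain ⟨φ, -, hφ⟩ := hν
  obtain ⟨q, hq⟩ := frequently_exists.1
    (Frequently.of_forall (f := atTop) fun N => exists_card_filter_xTri_eq_le (φ N))
  have hsmall : ν.toMeasure {y | y 0 = q} ≤ 3 / 13 :=
    ProbabilityMeasure.measure_le_of_tendsto_of_frequently_le hφ (isOpen_setOf_apply_zero_eq q)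
      (hq.mono fun N => cesaroEmp_shift3_xTri_le (φ N) q)
  have hlt : (3 / 13 : ℝ≥0∞) < 1 / 3 := by
    rw [ENNReal.div_lt_iff (by norm_num) (by norm_num), mul_comm, ← mul_div_assoc,
      ENNReal.lt_div_iff_mul_lt (by norm_num) (by norm_num)]
    norm_num
  exact ⟨⟨q, hsmall, hlt⟩, fun hall => (hall q ▸ hsmall).not_gt hlt⟩
end
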